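/- arXiv:math/0510227 — 5 statements merged into one kernel-verified Lean document; each statement's English description precedes it below -/
import Mathlib

section
/- For n ≥ l ≥ k ≥ 3, every k-uniform hypergraph on n vertices in which no family member of K_{l+1}^{(k)} occurs (i.e., there is no (l+1)-set L of vertices such that every pair of vertices of L is contained in some edge) has at most |T^{(k)}(n,l)| edges, where T^{(k)}(n,l) is the complete l-partite k-graph with almost equal parts. -/
open Finset

/-- A `k`-uniform hypergraph: every edge has `k` vertices. -/
def IsUniform (k : ℕ) {V : Type*} (G : Finset (Finset V)) : Prop :=
  ∀ e ∈ G, e.card = k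

/-- The Turán-type hypergraph `T^{(k)}(n,l)`: partition `Fin n` into `l` almost equal
parts (residues mod `l`) and take all `k`-sets meeting each part in at most one vertex. -/
def turan (n l k : ℕ) : Finset (Finset (Fin n)) :=
  ((Finset.univ : Finset (Fin n)).powersetCard k).filter
    (fun e => (e.image (fun v : Fin n => v.val % l)).card = e.card)

/-- The complete `l`-partite `k`-graph determined by parts `P`. -/
def multipartite {n : ℕ} (k : ℕ) {l : ℕ} (P : Fin l → Finset (Fin n)) :
    Finset (Finset (Fin n)) :=
  ((Finset.univ : Finset (Fin n)).powersetCard k).filter (fun e => ∀ i, (e ∩ P i).card ≤ 1)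

/-- `G` contains a (not necessarily induced) copy of the pattern `H`. -/
def Contains {α β : Type*} [DecidableEq α] [DecidableEq β]
    (H : Finset (Finset α)) (G : Finset (Finset β)) : Prop :=
  ∃ φ : α → β, Set.InjOn φ ↑(H.sup id) ∧ ∀ e ∈ H, e.image φ ∈ G

/-- The `k`-graph `H_l^{(k)}`: the complete graph on core `{0,…,l-1}`, each edge
enlarged by a fresh set of `k-2` vertices, all enlarging sets pairwise disjoint
and disjoint from the core. -/
def Hgraph (k l : ℕ) : Finset (Finset ℕ) :=
  ((((Finset.range l) ×ˢ (Finset.range l)).filter (fun p => p.1 < p.2))).image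
    (fun p => insert p.1 (insert p.2
      ((Finset.range (k - 2)).image (fun r => l + (p.1 * l + p.2) * (k - 2) + r))))

/-- The complete `k`-graph on `k+1` vertices, as a pattern on `ℕ`. -/
def Kpattern (k : ℕ) : Finset (Finset ℕ) := (Finset.range (k + 1)).powersetCard k

/-- The Turán number for a family of patterns `𝓕`: the maximum number of edges of a
`k`-uniform hypergraph on `n` vertices containing no member of `𝓕`. -/
noncomputable def exFam (k : ℕ) (F : Set (Finset (Finset ℕ))) (n : ℕ) : ℕ :=
  sSup {m | ∃ G : Finset (Finset (Fin n)), IsUniform k G ∧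
    (∀ H ∈ F, ¬ Contains H G) ∧ G.card = m}

/-- Two hypergraphs on `Fin n` are `m`-close: some relabelling of the vertices makes the
symmetric difference of the edge sets have at most `m` edges. -/
def Close {n : ℕ} (G H : Finset (Finset (Fin n))) (m : ℝ) : Prop :=
  ∃ σ : Fin n ≃ Fin n, (((symmDiff (G.image (fun e => e.image σ)) H)).card : ℝ) ≤ m

/-- A family `F` of patterns with Turán density `p` is `s`-stable. -/
def Stable (k s : ℕ) (F : Set (Finset (Finset ℕ))) (p : ℝ) : Prop :=
  ∀ ε : ℝ, 0 < ε → ∃ δ : ℝ, 0 < δ ∧ ∃ n₀ : ℕ, ∀ n ≥ n₀,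
    ∀ G : Fin (s + 1) → Finset (Finset (Fin n)),
      (∀ i, IsUniform k (G i) ∧ (∀ H ∈ F, ¬ Contains H (G i)) ∧
        (p - δ) * (n.choose k : ℝ) ≤ ((G i).card : ℝ)) →
      ∃ i j, i ≠ j ∧ Close (G i) (G j) (ε * (n.choose k : ℝ))

/-- The `t`-blowup of a pattern on `ℕ`: each vertex `v` is replaced by the `t` copies
`v*t, …, v*t+t-1`, and each edge by all choices of one copy of each of its vertices. -/
def blowupN (F : Finset (Finset ℕ)) (t : ℕ) : Finset (Finset ℕ) :=
  F.biUnion (fun e => (Finset.univ : Finset ({x // x ∈ e} → Fin t)).image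
    (fun f => e.attach.image (fun x : {y // y ∈ e} => x.1 * t + (f x).1)))

/-! Zykov's generalisation of Turán's theorem does the work. Every edge of `G` is a `k`-clique of
its shadow graph (pairs covered by an edge), which is `K_{l+1}`-free, and `T^{(k)}(n,l)` is exactly
the set of `k`-cliques of the Turán graph `T(n,l)`.

A `K_{l+1}`-free graph on `n + 1` vertices has a vertex `v` of degree at most `n - ⌊n/l⌋`, for
otherwise an `(l+1)`-clique can be grown greedily. Its `k`-cliques either avoid `v` or are
`(k-1)`-cliques of the `K_l`-free neighbourhood of `v` plus `v`. The last vertex of `T(n+1,l)`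
splits the cliques of `T(n+1,l)` in the same way, and its neighbourhood contains a copy of
`T(n-⌊n/l⌋,l-1)`; so induction on the number of vertices bounds the number of `k`-cliques by that
of the Turán graph. -/

namespace SimpleGraph

section CliqueFinset

variable {α β : Type*} {G : SimpleGraph α} {H : SimpleGraph β} {k : ℕ}

lemma IsNClique.map_embedding (f : G ↪g H) {s : Finset α} (hs : G.IsNClique k s) :
    H.IsNClique k (s.map f.toEmbedding) :=
  hs.map.mono <| (map_le_iff_le_comap _ _ _).2 fun _ _ ↦ f.map_adj_iff.2

lemma card_cliqueFinset_le_of_embedding [Fintype α] [DecidableEq α] [DecidableRel G.Adj]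
    [Fintype β] [DecidableEq β] [DecidableRel H.Adj] (f : G ↪g H) :
    #(G.cliqueFinset k) ≤ #(H.cliqueFinset k) :=
  card_le_card_of_injOn (·.map f.toEmbedding)
    (fun s hs ↦ by simpa using (mem_cliqueFinset_iff.1 hs).map_embedding f)
    (Finset.map_injective _).injOn

lemma card_cliqueFinset_zero [Fintype α] [DecidableEq α] [DecidableRel G.Adj] :
    #(G.cliqueFinset 0) = 1 := by
  simp [cliqueFinset, isNClique_zero, Finset.filter_eq']

end CliqueFinset

def turanGraphCastLE {m n : ℕ} (h : m ≤ n) (r : ℕ) : turanGraph m r ↪g turanGraph n r where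
  toEmbedding := Fin.castLEEmb h
  map_rel_iff' := by simp [turanGraph_adj]

lemma card_cliqueFinset_turanGraph_mono {m n : ℕ} (h : m ≤ n) (r k : ℕ) :
    #((turanGraph m r).cliqueFinset k) ≤ #((turanGraph n r).cliqueFinset k) :=
  card_cliqueFinset_le_of_embedding (turanGraphCastLE h r)

section TuranNeighbor

/-- Read `x` as row `x / l`, column `x % l` of a grid with `l` columns, and send it to the same row
of the grid with `l + 1` columns, skipping the column `n % (l + 1)` of the vertex `n`. This embeds
`turanGraph (n - n / (l + 1)) l` into the neighbourhood of `n` in `turanGraph (n + 1) (l + 1)`. -/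
def turanNeighborMap (n l x : ℕ) : ℕ :=
  x / l * (l + 1) + if x % l < n % (l + 1) then x % l else x % l + 1

variable {n l : ℕ}

lemma pos_of_lt_sub_div_succ {x : ℕ} (hx : x < n - n / (l + 1)) : 0 < l := by
  rcases Nat.eq_zero_or_pos l with rfl | hl
  · simp at hx
  · exact hl

lemma turanNeighborMap_mod (hl : 0 < l) (x : ℕ) :
    turanNeighborMap n l x % (l + 1) = if x % l < n % (l + 1) then x % l else x % l + 1 := by
  have := Nat.mod_lt x hl
  exact Nat.mul_add_mod_of_lt (by split_ifs <;> omega)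

lemma turanNeighborMap_div (hl : 0 < l) (x : ℕ) :
    turanNeighborMap n l x / (l + 1) = x / l := by
  have := Nat.mod_lt x hl
  rw [turanNeighborMap, mul_comm, Nat.mul_add_div (by omega), add_eq_left, Nat.div_eq_zero_iff]
  split_ifs <;> omega

lemma turanNeighborMap_lt {x : ℕ} (hx : x < n - n / (l + 1)) : turanNeighborMap n l x < n := by
  have hl := pos_of_lt_sub_div_succ hx
  have hn := Nat.div_add_mod n (l + 1)
  have hx' := Nat.div_add_mod x l
  have hb := Nat.mod_lt x hl
  have hc := Nat.mod_lt n (Nat.succ_pos l)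
  unfold turanNeighborMap
  generalize n / (l + 1) = q, n % (l + 1) = c, x / l = a, x % l = b at *
  subst hn hx'
  replace hx : l * a + b < l * q + c := by rw [add_one_mul] at hx; omega
  rcases lt_or_ge a q with h | h
  · have : (a + 1) * (l + 1) ≤ q * (l + 1) := Nat.mul_le_mul_right (l + 1) h
    split_ifs <;> nlinarith
  · have : l * q ≤ l * a := Nat.mul_le_mul_left l h
    have : a < q + 1 := Nat.lt_of_mul_lt_mul_left (a := l) (by nlinarith)
    obtain rfl : a = q := by omega
    split_ifs <;> nlinarith

def turanNeighborEmbedding (n l : ℕ) :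
    turanGraph (n - n / (l + 1)) l ↪g turanGraph (n + 1) (l + 1) where
  toFun x := ⟨turanNeighborMap n l x, by have := turanNeighborMap_lt x.2; omega⟩
  inj' x y hxy := by
    have hl := pos_of_lt_sub_div_succ x.2
    have h : turanNeighborMap n l x = turanNeighborMap n l y := congrArg Fin.val hxy
    have hdiv := congrArg (· / (l + 1)) h
    have hmod := congrArg (· % (l + 1)) h
    simp only [turanNeighborMap_div hl, turanNeighborMap_mod hl] at hdiv hmod
    have hx := Nat.div_add_mod (x : ℕ) l
    have hy := Nat.div_add_mod (y : ℕ) l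
    rw [hdiv] at hx
    ext
    split_ifs at hmod <;> omega
  map_rel_iff' {x y} := by
    have hl := pos_of_lt_sub_div_succ x.2
    change turanNeighborMap n l x % (l + 1) ≠ turanNeighborMap n l y % (l + 1) ↔
      (x : ℕ) % l ≠ y % l
    rw [turanNeighborMap_mod hl, turanNeighborMap_mod hl]
    split_ifs <;> omega

lemma turanGraph_adj_last_turanNeighborEmbedding (x : Fin (n - n / (l + 1))) :
    (turanGraph (n + 1) (l + 1)).Adj (Fin.last n) (turanNeighborEmbedding n l x) := by
  have hl := pos_of_lt_sub_div_succ x.2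
  change n % (l + 1) ≠ turanNeighborMap n l x % (l + 1)
  rw [turanNeighborMap_mod hl]
  have := Nat.mod_lt n (Nat.succ_pos l)
  split_ifs <;> omega

lemma card_cliqueFinset_turanGraph_add_le (k : ℕ) :
    #((turanGraph n (l + 1)).cliqueFinset (k + 1)) +
        #((turanGraph (n - n / (l + 1)) l).cliqueFinset k) ≤
      #((turanGraph (n + 1) (l + 1)).cliqueFinset (k + 1)) := by
  set T := turanGraph (n + 1) (l + 1)
  set ι := (turanGraphCastLE n.le_succ (l + 1)).toEmbedding
  set φ := (turanNeighborEmbedding n l).toEmbedding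
  have hι : ∀ s : Finset (Fin n), Fin.last n ∉ s.map ι := by
    simp [ι, turanGraphCastLE, Fin.ext_iff, Fin.val_last, Nat.ne_of_lt]
  have hφ : ∀ s : Finset (Fin (n - n / (l + 1))), Fin.last n ∉ s.map φ := fun s h ↦ by
    obtain ⟨x, -, hx⟩ := Finset.mem_map.1 h
    exact (turanGraph_adj_last_turanNeighborEmbedding x).ne hx.symm
  let A := ((turanGraph n (l + 1)).cliqueFinset (k + 1)).map ⟨map ι, Finset.map_injective ι⟩
  let B := ((turanGraph (n - n / (l + 1)) l).cliqueFinset k).image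
    fun s ↦ insert (Fin.last n) (s.map φ)
  have hB : #B = #((turanGraph (n - n / (l + 1)) l).cliqueFinset k) := by
    refine card_image_of_injective _ fun s t hst ↦ Finset.map_injective φ ?_
    simpa [hφ] using congrArg (·.erase (Fin.last n)) hst
  have hdisj : Disjoint A B := by
    simp only [A, B, Finset.disjoint_left, Finset.mem_map, Finset.mem_image]
    rintro _ ⟨s, -, rfl⟩ ⟨t, -, ht⟩
    have := ht ▸ Finset.mem_insert_self (Fin.last n) (t.map φ)
    exact hι s this
  have hsub : A ∪ B ⊆ T.cliqueFinset (k + 1) := by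
    refine Finset.union_subset (fun u hu ↦ ?_) (fun u hu ↦ ?_) <;>
      simp only [A, B, Finset.mem_map, Finset.mem_image, mem_cliqueFinset_iff] at hu ⊢
    · obtain ⟨s, hs, rfl⟩ := hu
      exact hs.map_embedding (turanGraphCastLE n.le_succ (l + 1))
    · obtain ⟨s, hs, rfl⟩ := hu
      refine (hs.map_embedding (turanNeighborEmbedding n l)).insert fun b hb ↦ ?_
      obtain ⟨x, -, rfl⟩ := Finset.mem_map.1 hb
      exact turanGraph_adj_last_turanNeighborEmbedding x
  calc _ = #A + #B := by rw [hB, card_map]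
    _ = #(A ∪ B) := (card_union_of_disjoint hdisj).symm
    _ ≤ _ := card_le_card hsub

end TuranNeighbor

section CliquesOn

variable {α : Type*} [DecidableEq α] (G : SimpleGraph α) [DecidableRel G.Adj]

def cliqueFinsetOn (s : Finset α) (k : ℕ) : Finset (Finset α) :=
  {t ∈ s.powerset | G.IsNClique k t}

variable {G}

@[simp]
lemma mem_cliqueFinsetOn {s t : Finset α} {k : ℕ} :
    t ∈ G.cliqueFinsetOn s k ↔ t ⊆ s ∧ G.IsNClique k t := by
  simp [cliqueFinsetOn]

lemma card_cliqueFinsetOn_zero_le {s : Finset α} : #(G.cliqueFinsetOn s 0) ≤ 1 :=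
  Finset.card_le_one.2 fun _ ha _ hb ↦ by simp_all [isNClique_zero]

lemma cliqueFinsetOn_eq_empty_of_card_lt {s : Finset α} {k : ℕ} (h : #s < k) :
    G.cliqueFinsetOn s k = ∅ :=
  Finset.eq_empty_of_forall_notMem fun t ht ↦ by
    have := Finset.card_le_card (mem_cliqueFinsetOn.1 ht).1
    have := (mem_cliqueFinsetOn.1 ht).2.card_eq
    omega

lemma card_cliqueFinsetOn_succ_le (s : Finset α) (v : α) (k : ℕ) :
    #(G.cliqueFinsetOn s (k + 1)) ≤
      #(G.cliqueFinsetOn (s.erase v) (k + 1)) + #(G.cliqueFinsetOn {w ∈ s | G.Adj v w} k) := by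
  rw [← Finset.card_filter_add_card_filter_not (fun t ↦ v ∉ t)]
  refine add_le_add ?_ ?_
  · refine Finset.card_le_card fun t ht ↦ ?_
    simp only [Finset.mem_filter, mem_cliqueFinsetOn] at ht ⊢
    exact ⟨Finset.subset_erase.2 ⟨ht.1.1, ht.2⟩, ht.1.2⟩
  · refine Finset.card_le_card_of_injOn (·.erase v) (fun t ht ↦ ?_) (fun t ht u hu htu ↦ ?_)
    · simp only [Finset.coe_filter, mem_cliqueFinsetOn, not_not, Set.mem_ofPred_eq] at ht
      simp only [mem_cliqueFinsetOn, Finset.mem_coe]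
      refine ⟨fun w hw ↦ ?_, ht.1.2.erase_of_mem ht.2⟩
      obtain ⟨hwv, hwt⟩ := Finset.mem_erase.1 hw
      exact Finset.mem_filter.2 ⟨ht.1.1 hwt, ht.1.2.1 ht.2 hwt (Ne.symm hwv)⟩
    · simp only [Finset.coe_filter, not_not, Set.mem_ofPred_eq] at ht hu
      rw [← Finset.insert_erase ht.2, ← Finset.insert_erase hu.2]
      exact congrArg (insert v) htu

lemma exists_isNClique_of_card_not_adj_le {s : Finset α} {d : ℕ}
    (hd : ∀ v ∈ s, #{w ∈ s | ¬G.Adj v w} ≤ d) :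
    ∀ j, j * d < #s → ∃ t ⊆ s, G.IsNClique (j + 1) t
  | 0, hs => by
    obtain ⟨v, hv⟩ := Finset.card_pos.1 (by omega : 0 < #s)
    exact ⟨{v}, by simpa using hv, isNClique_one.2 ⟨v, rfl⟩⟩
  | j + 1, hs => by
    obtain ⟨t, hts, ht⟩ := exists_isNClique_of_card_not_adj_le hd j
      (lt_of_le_of_lt (Nat.mul_le_mul_right d j.le_succ) hs)
    have hbad : #(t.biUnion fun v ↦ {w ∈ s | ¬G.Adj v w}) < #s := calc
      _ ≤ ∑ v ∈ t, #{w ∈ s | ¬G.Adj v w} := Finset.card_biUnion_le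
      _ ≤ ∑ _v ∈ t, d := Finset.sum_le_sum fun v hv ↦ hd v (hts hv)
      _ < #s := by rwa [Finset.sum_const, ht.card_eq, smul_eq_mul]
    obtain ⟨w, hws, hw⟩ := Finset.exists_mem_notMem_of_card_lt_card hbad
    simp only [Finset.mem_biUnion, Finset.mem_filter, not_exists, not_and, not_not] at hw
    exact ⟨insert w t, Finset.insert_subset hws hts,
      ht.insert fun v hv ↦ (hw v hv hws).symm⟩

lemma exists_card_adj_le_of_cliqueFreeOn {s : Finset α} {n l : ℕ} (hs : #s = n + 1)
    (h : G.CliqueFreeOn s (l + 1)) : ∃ v ∈ s, #{w ∈ s | G.Adj v w} ≤ n - n / l := by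
  by_contra! hdeg
  have hnonadj : ∀ v ∈ s, #{w ∈ s | ¬G.Adj v w} ≤ n / l := fun v hv ↦ by
    have := Finset.card_filter_add_card_filter_not (s := s) (fun w ↦ G.Adj v w)
    have := hdeg v hv
    have := Nat.div_le_self n l
    omega
  obtain ⟨t, hts, ht⟩ := exists_isNClique_of_card_not_adj_le hnonadj l
    (by rw [hs, mul_comm]; exact Nat.lt_succ_of_le (Nat.div_mul_le_self n l))
  exact h (by simpa using hts) ht

theorem card_cliqueFinsetOn_le_turanGraph {s : Finset α} {l k : ℕ}
    (h : G.CliqueFreeOn s (l + 1)) :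
    #(G.cliqueFinsetOn s k) ≤ #((turanGraph #s l).cliqueFinset k) := by
  induction s using Finset.strongInduction generalizing l k with | H s ih =>
  cases k with
  | zero => exact card_cliqueFinsetOn_zero_le.trans card_cliqueFinset_zero.ge
  | succ k =>
  rcases (#s).eq_zero_or_pos with hs | hs
  · simp [cliqueFinsetOn_eq_empty_of_card_lt (G := G) (s := s) (k := k + 1) (by omega)]
  obtain ⟨n, hn⟩ := Nat.exists_eq_add_one.2 hs
  cases l with
  | zero =>
    obtain ⟨v, hv⟩ := Finset.card_pos.1 hs
    exact absurd (isNClique_one.2 ⟨v, rfl⟩) (h (by simpa using hv))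
  | succ l =>
  obtain ⟨v, hv, hdeg⟩ := exists_card_adj_le_of_cliqueFreeOn hn h
  set N := {w ∈ s | G.Adj v w}
  have hNs : N ⊂ s := Finset.filter_ssubset.2 ⟨v, hv, G.irrefl⟩
  have hN : G.CliqueFreeOn N (l + 1) := by
    convert CliqueFreeOn.of_succ G h hv using 1
    ext w
    simp [N]
  rw [hn]
  calc _ ≤ #(G.cliqueFinsetOn (s.erase v) (k + 1)) + #(G.cliqueFinsetOn N k) :=
        card_cliqueFinsetOn_succ_le s v k
    _ ≤ #((turanGraph #(s.erase v) (l + 1)).cliqueFinset (k + 1)) +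
          #((turanGraph #N l).cliqueFinset k) :=
        add_le_add (ih _ (Finset.erase_ssubset hv) (CliqueFreeOn.subset G (by simp) h))
          (ih N hNs hN)
    _ ≤ #((turanGraph n (l + 1)).cliqueFinset (k + 1)) +
          #((turanGraph (n - n / (l + 1)) l).cliqueFinset k) := by
        rw [Finset.card_erase_of_mem hv, hn, Nat.add_sub_cancel]
        exact Nat.add_le_add_left (card_cliqueFinset_turanGraph_mono hdeg _ _) _
    _ ≤ _ := card_cliqueFinset_turanGraph_add_le k

end CliquesOn

end SimpleGraph

section Hypergraph

variable {V : Type*}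

def shadowGraph (G : Finset (Finset V)) : SimpleGraph V :=
  SimpleGraph.fromRel fun x y ↦ ∃ e ∈ G, x ∈ e ∧ y ∈ e

lemma shadowGraph_adj {G : Finset (Finset V)} {x y : V} :
    (shadowGraph G).Adj x y ↔ x ≠ y ∧ ∃ e ∈ G, x ∈ e ∧ y ∈ e := by
  simp only [shadowGraph, SimpleGraph.fromRel_adj, and_congr_right_iff]
  exact fun _ ↦ ⟨fun h ↦ h.elim id fun ⟨e, he, hy, hx⟩ ↦ ⟨e, he, hx, hy⟩, Or.inl⟩

lemma IsUniform.isNClique_shadowGraph {k : ℕ} {G : Finset (Finset V)} (hG : IsUniform k G)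
    {e : Finset V} (he : e ∈ G) : (shadowGraph G).IsNClique k e :=
  ⟨fun _ hx _ hy hxy ↦ shadowGraph_adj.2 ⟨hxy, e, he, hx, hy⟩, hG e he⟩

lemma cliqueFree_shadowGraph_iff {G : Finset (Finset V)} {m : ℕ} :
    (shadowGraph G).CliqueFree m ↔
      ¬ ∃ L : Finset V, L.card = m ∧
        ∀ x ∈ L, ∀ y ∈ L, x ≠ y → ∃ e ∈ G, x ∈ e ∧ y ∈ e := by
  simp only [SimpleGraph.CliqueFree, SimpleGraph.isNClique_iff, SimpleGraph.isClique_iff,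
    Set.Pairwise, mem_coe, shadowGraph_adj, not_exists, not_and]
  exact ⟨fun h L hL hcov ↦ h L (fun x hx y hy hxy ↦ ⟨hxy, hcov x hx y hy hxy⟩) hL,
    fun h L hcl hL ↦ h L hL fun x hx y hy hxy ↦ (hcl hx hy hxy).2⟩

end Hypergraph

lemma turan_eq_cliqueFinset_turanGraph (n l k : ℕ) :
    turan n l k = (SimpleGraph.turanGraph n l).cliqueFinset k := by
  ext e
  simp only [turan, card_image_iff, Set.InjOn, SetLike.mem_coe, mem_filter, mem_powersetCard,
    subset_univ, true_and, SimpleGraph.mem_cliqueFinset_iff, SimpleGraph.isNClique_iff,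
    SimpleGraph.isClique_iff, Set.Pairwise, ne_eq, SimpleGraph.turanGraph_adj, and_comm,
    and_congr_right_iff]
  exact fun _ ↦ ⟨fun h x hx y hy hxy hmod ↦ hxy (h hx hy hmod),
    fun h x hx y hy hmod ↦ by_contra fun hxy ↦ h hx hy hxy hmod⟩

theorem stmt0_general (n l k : ℕ)
    (G : Finset (Finset (Fin n))) (hG : IsUniform k G)
    (hfree : ¬ ∃ L : Finset (Fin n), L.card = l + 1 ∧ ∀ x ∈ L, ∀ y ∈ L, x ≠ y → ∃ e ∈ G, x ∈ e ∧ y ∈ e) :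
    G.card ≤ (turan n l k).card := by
  classical
  have hcf : (shadowGraph G).CliqueFree (l + 1) := cliqueFree_shadowGraph_iff.2 hfree
  calc G.card ≤ #((shadowGraph G).cliqueFinsetOn univ k) := card_le_card fun e he ↦
        SimpleGraph.mem_cliqueFinsetOn.2 ⟨subset_univ e, hG.isNClique_shadowGraph he⟩
    _ ≤ #((SimpleGraph.turanGraph n l).cliqueFinset k) := by
        have := SimpleGraph.card_cliqueFinsetOn_le_turanGraph (s := univ) (k := k)
          (hcf.cliqueFreeOn (shadowGraph G))
        rwa [card_fin] at this
    _ = (turan n l k).card := by rw [turan_eq_cliqueFinset_turanGraph]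

/-- for `n ≥ l ≥ k ≥ 3`, every `k`-uniform hypergraph on `n` vertices with no
`(l+1)`-set all of whose pairs are covered by edges has at most `|T^(k)(n,l)|` edges. -/
theorem stmt0 (n l k : ℕ) (hk : 3 ≤ k) (hl : k ≤ l) (hn : l ≤ n)
    (G : Finset (Finset (Fin n))) (hG : IsUniform k G)
    (hfree : ¬ ∃ L : Finset (Fin n), L.card = l + 1 ∧ ∀ x ∈ L, ∀ y ∈ L, x ≠ y → ∃ e ∈ G, x ∈ e ∧ y ∈ e) :
    G.card ≤ (turan n l k).card :=
  stmt0_general n l k G hG hfree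
end

section
/- For n ≥ l ≥ k ≥ 3, the complete l-partite k-graph T^{(k)}(n,l) with almost equal parts is, up to isomorphism, the unique k-graph on n vertices of maximum size with the property that no (l+1)-set of vertices has all of its pairs covered by edges. -/
open Finset

namespace Stmt1Aux


def inj (n k : ℕ) (c : Fin n → ℕ) : Finset (Finset (Fin n)) :=
  ((Finset.univ : Finset (Fin n)).powersetCard k).filter (fun e => (e.image c).card = e.card)

def CovFree (n l : ℕ) (G : Finset (Finset (Fin n))) : Prop :=
  ¬ ∃ L : Finset (Fin n), L.card = l + 1 ∧ ∀ x ∈ L, ∀ y ∈ L, x ≠ y → ∃ e ∈ G, x ∈ e ∧ y ∈ e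

variable {n l k : ℕ}

lemma turan_eq : turan n l k = inj n k (fun v => v.val % l) := rfl

lemma mem_inj {c : Fin n → ℕ} {e : Finset (Fin n)} :
    e ∈ inj n k c ↔ e.card = k ∧ Set.InjOn c ↑e := by
  rw [inj, Finset.mem_filter, Finset.mem_powersetCard_univ, Finset.card_image_iff]

lemma inj_uniform (c : Fin n → ℕ) : IsUniform k (inj n k c) :=
  fun e he => (mem_inj.mp he).1

lemma inj_covFree {c : Fin n → ℕ} (hc : ((Finset.univ : Finset (Fin n)).image c).card ≤ l) :
    CovFree n l (inj n k c) := by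
  rintro ⟨L, hL, hcov⟩
  obtain ⟨x, hx, y, hy, hxy, hcxy⟩ :=
    Finset.exists_ne_map_eq_of_card_lt_of_maps_to (t := (Finset.univ : Finset (Fin n)).image c)
      (by omega) (fun a _ => Finset.mem_image_of_mem c (Finset.mem_univ a)) (f := c) (s := L)
  obtain ⟨e, he, hxe, hye⟩ := hcov x hx y hy hxy
  exact hxy ((mem_inj.mp he).2 hxe hye hcxy)


def repl (G : Finset (Finset (Fin n))) (x y : Fin n) : Finset (Finset (Fin n)) :=
  (G.filter (fun e => x ∉ e)) ∪ ((G.filter (fun e => y ∈ e)).image (fun e => insert x (e.erase y)))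

def deg (G : Finset (Finset (Fin n))) (v : Fin n) : ℕ := (G.filter (fun e => v ∈ e)).card

variable {G : Finset (Finset (Fin n))} {x y z : Fin n}

lemma mem_repl {e' : Finset (Fin n)} :
    e' ∈ repl G x y ↔ (e' ∈ G ∧ x ∉ e') ∨ (∃ e ∈ G, y ∈ e ∧ e' = insert x (e.erase y)) := by
  simp [repl, Finset.mem_union, Finset.mem_filter, Finset.mem_image]
  tauto

section
variable (hxy : x ≠ y) (hsep : ∀ e ∈ G, ¬(x ∈ e ∧ y ∈ e))
include hxy hsep

lemma repl_uniform (hG : IsUniform k G) : IsUniform k (repl G x y) := by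
  intro e' he'
  rcases mem_repl.mp he' with ⟨h1, _⟩ | ⟨e, he, hy, rfl⟩
  · exact hG _ h1
  · have hx : x ∉ e := fun hx => hsep e he ⟨hx, hy⟩
    rw [Finset.card_insert_of_notMem (fun h => hx (Finset.mem_of_mem_erase h)),
      Finset.card_erase_of_mem hy]
    have := hG e he
    have : 1 ≤ e.card := Finset.card_pos.mpr ⟨y, hy⟩
    omega

lemma repl_card : (repl G x y).card + deg G x = G.card + deg G y := by
  have hdisj : Disjoint (G.filter (fun e => x ∉ e))
      ((G.filter (fun e => y ∈ e)).image (fun e => insert x (e.erase y))) := by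
    rw [Finset.disjoint_left]
    rintro a ha hb
    rw [Finset.mem_filter] at ha
    rw [Finset.mem_image] at hb
    obtain ⟨e, _, rfl⟩ := hb
    exact ha.2 (Finset.mem_insert_self x _)
  have hinj : Set.InjOn (fun e : Finset (Fin n) => insert x (e.erase y)) ↑(G.filter (fun e => y ∈ e)) := by
    intro a ha b hb hab
    simp only [Finset.coe_filter, Set.mem_setOf_eq] at ha hb
    have hax : x ∉ a := fun h => hsep a ha.1 ⟨h, ha.2⟩
    have hbx : x ∉ b := fun h => hsep b hb.1 ⟨h, hb.2⟩
    have h1 : a.erase y = b.erase y := by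
      have := congrArg (Finset.erase · x) hab
      simpa [Finset.erase_insert_of_ne, Finset.erase_insert,
        fun h => hax (Finset.mem_of_mem_erase h), fun h => hbx (Finset.mem_of_mem_erase h),
        Finset.erase_eq_of_notMem (fun h : x ∈ a.erase y => hax (Finset.mem_of_mem_erase h)),
        Finset.erase_eq_of_notMem (fun h : x ∈ b.erase y => hbx (Finset.mem_of_mem_erase h))]
        using this
    have := congrArg (insert y) h1
    rwa [Finset.insert_erase ha.2, Finset.insert_erase hb.2] at this
  rw [repl, Finset.card_union_of_disjoint hdisj, Finset.card_image_of_injOn hinj]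
  have hsplit : (G.filter (fun e => x ∉ e)).card + (G.filter (fun e => x ∈ e)).card = G.card := by
    rw [add_comm, Finset.card_filter_add_card_filter_not]
  unfold deg
  omega

lemma repl_covFree (hcf : CovFree n l G) : CovFree n l (repl G x y) := by
  have covmap : ∀ u w : Fin n, u ≠ x → w ≠ x → (∃ e ∈ repl G x y, u ∈ e ∧ w ∈ e) →
      ∃ e ∈ G, u ∈ e ∧ w ∈ e := by
    rintro u w hu hw ⟨e', he', hue, hwe⟩
    rcases mem_repl.mp he' with ⟨h1, _⟩ | ⟨e, he, hy, rfl⟩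
    · exact ⟨e', h1, hue, hwe⟩
    · refine ⟨e, he, ?_, ?_⟩
      · rcases Finset.mem_insert.mp hue with h | h
        · exact absurd h hu
        · exact Finset.mem_of_mem_erase h
      · rcases Finset.mem_insert.mp hwe with h | h
        · exact absurd h hw
        · exact Finset.mem_of_mem_erase h
  have covx : ∀ w : Fin n, w ≠ x → (∃ e ∈ repl G x y, x ∈ e ∧ w ∈ e) →
      w ≠ y ∧ ∃ e ∈ G, y ∈ e ∧ w ∈ e := by
    rintro w hw ⟨e', he', hxe, hwe⟩
    rcases mem_repl.mp he' with ⟨_, h2⟩ | ⟨e, he, hy, rfl⟩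
    · exact absurd hxe h2
    · rcases Finset.mem_insert.mp hwe with h | h
      · exact absurd h hw
      · exact ⟨fun hwy => (Finset.notMem_erase y e) (hwy ▸ h), e, he, hy, Finset.mem_of_mem_erase h⟩
  rintro ⟨L, hL, hcov⟩
  by_cases hxL : x ∈ L
  · have hyL : y ∉ L := by
      intro hyL
      obtain ⟨hne, _⟩ := covx y hxy.symm (hcov x hxL y hyL hxy)
      exact hne rfl
    refine hcf ⟨insert y (L.erase x), ?_, ?_⟩
    · rw [Finset.card_insert_of_notMem (fun h => hyL (Finset.mem_of_mem_erase h)),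
        Finset.card_erase_of_mem hxL, hL]
      omega
    · intro u hu w hw huw
      rcases Finset.mem_insert.mp hu with rfl | hu' <;> rcases Finset.mem_insert.mp hw with rfl | hw'
      · exact absurd rfl huw
      · have hwx : w ≠ x := fun h => (Finset.notMem_erase x L) (h ▸ hw')
        exact (covx w hwx (hcov x hxL w (Finset.mem_of_mem_erase hw') (Ne.symm hwx))).2
      · have hux : u ≠ x := fun h => (Finset.notMem_erase x L) (h ▸ hu')
        obtain ⟨e, he, hye, hue⟩ := (covx u hux (hcov x hxL u (Finset.mem_of_mem_erase hu') (Ne.symm hux))).2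
        exact ⟨e, he, hue, hye⟩
      · have hux : u ≠ x := fun h => (Finset.notMem_erase x L) (h ▸ hu')
        have hwx : w ≠ x := fun h => (Finset.notMem_erase x L) (h ▸ hw')
        exact covmap u w hux hwx (hcov u (Finset.mem_of_mem_erase hu') w (Finset.mem_of_mem_erase hw') huw)
  · refine hcf ⟨L, hL, ?_⟩
    intro u hu w hw huw
    have hux : u ≠ x := fun h => hxL (h ▸ hu)
    have hwx : w ≠ x := fun h => hxL (h ▸ hw)
    exact covmap u w hux hwx (hcov u hu w hw huw)

lemma repl_deg_y : deg (repl G x y) y = deg G y := by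
  unfold deg
  congr 1
  ext e'
  simp only [Finset.mem_filter]
  constructor
  · rintro ⟨he', hy'⟩
    rcases mem_repl.mp he' with ⟨h1, _⟩ | ⟨e, he, hye, rfl⟩
    · exact ⟨h1, hy'⟩
    · rcases Finset.mem_insert.mp hy' with h | h
      · exact absurd h.symm hxy
      · exact absurd h (Finset.notMem_erase y e)
  · rintro ⟨he, hy'⟩
    exact ⟨mem_repl.mpr (Or.inl ⟨he, fun hx => hsep e' he ⟨hx, hy'⟩⟩), hy'⟩

lemma repl_sep_z (hz : z ≠ x) (hzy : ∀ e ∈ G, ¬(z ∈ e ∧ y ∈ e)) :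
    ∀ e ∈ repl G x y, ¬(z ∈ e ∧ y ∈ e) := by
  rintro e' he' ⟨hze, hye⟩
  rcases mem_repl.mp he' with ⟨h1, _⟩ | ⟨e, he, hyy, rfl⟩
  · exact hzy e' h1 ⟨hze, hye⟩
  · rcases Finset.mem_insert.mp hye with h | h
    · exact hxy h.symm
    · exact Finset.notMem_erase y e h

lemma repl_deg_z (hz : z ≠ x) (hzny : z ≠ y) (hzy : ∀ e ∈ G, ¬(z ∈ e ∧ y ∈ e)) :
    deg (repl G x y) z + (G.filter (fun e => x ∈ e ∧ z ∈ e)).card = deg G z := by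
  unfold deg
  have h1 : (repl G x y).filter (fun e => z ∈ e) = G.filter (fun e => z ∈ e ∧ x ∉ e) := by
    ext e'
    simp only [Finset.mem_filter]
    constructor
    · rintro ⟨he', hz'⟩
      rcases mem_repl.mp he' with ⟨hg, hx⟩ | ⟨e, he, hye, rfl⟩
      · exact ⟨hg, hz', hx⟩
      · rcases Finset.mem_insert.mp hz' with h | h
        · exact absurd h hz
        · exact absurd ⟨Finset.mem_of_mem_erase h, hye⟩ (hzy e he)
    · rintro ⟨he, hz', hx⟩
      exact ⟨mem_repl.mpr (Or.inl ⟨he, hx⟩), hz'⟩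
  rw [h1]
  have h2 : (G.filter (fun e => z ∈ e ∧ x ∉ e)).card + (G.filter (fun e => z ∈ e ∧ x ∈ e)).card
      = (G.filter (fun e => z ∈ e)).card := by
    rw [← Finset.filter_filter, ← Finset.filter_filter (fun e => z ∈ e)]
    rw [add_comm, Finset.card_filter_add_card_filter_not]
  have h3 : G.filter (fun e => x ∈ e ∧ z ∈ e) = G.filter (fun e => z ∈ e ∧ x ∈ e) := by
    apply Finset.filter_congr; intro e _; constructor <;> (intro h; exact ⟨h.2, h.1⟩)
  rw [h3]
  omega

end

variable {n l k : ℕ} {G : Finset (Finset (Fin n))}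

lemma no_bad_triple (hG : IsUniform k G) (hcf : CovFree n l G)
    (hmax : ∀ G' : Finset (Finset (Fin n)), IsUniform k G' → CovFree n l G' → G'.card ≤ G.card)
    {x y z : Fin n} (hxy : x ≠ y) (hzy : z ≠ y) (hzx : z ≠ x)
    (hsxy : ∀ e ∈ G, ¬(x ∈ e ∧ y ∈ e)) (hszy : ∀ e ∈ G, ¬(z ∈ e ∧ y ∈ e))
    (hadj : ∃ e ∈ G, x ∈ e ∧ z ∈ e) : False := by
  have hsyx : ∀ e ∈ G, ¬(y ∈ e ∧ x ∈ e) := fun e he h => hsxy e he ⟨h.2, h.1⟩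
  have hsyz : ∀ e ∈ G, ¬(y ∈ e ∧ z ∈ e) := fun e he h => hszy e he ⟨h.2, h.1⟩
  -- deg x = deg y
  have h1 := repl_card (G := G) (x := x) (y := y) hxy hsxy
  have h2 := hmax _ (repl_uniform hxy hsxy hG) (repl_covFree hxy hsxy hcf)
  have h1' := repl_card (G := G) (x := y) (y := x) hxy.symm hsyx
  have h2' := hmax _ (repl_uniform hxy.symm hsyx hG) (repl_covFree hxy.symm hsyx hcf)
  have hdxy : deg G x = deg G y := by omega
  have h3 := repl_card (G := G) (x := z) (y := y) hzy hszy
  have h3' := repl_card (G := G) (x := y) (y := z) hzy.symm hsyz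
  have h4 := hmax _ (repl_uniform hzy hszy hG) (repl_covFree hzy hszy hcf)
  have h4' := hmax _ (repl_uniform hzy.symm hsyz hG) (repl_covFree hzy.symm hsyz hcf)
  have hdzy : deg G z = deg G y := by omega
  -- second replacement
  set G₂ := repl G x y with hG₂
  have hG₂u : IsUniform k G₂ := repl_uniform hxy hsxy hG
  have hG₂cf : CovFree n l G₂ := repl_covFree hxy hsxy hcf
  have hsep₂ : ∀ e ∈ G₂, ¬(z ∈ e ∧ y ∈ e) := repl_sep_z hxy hsxy hzx hszy
  have h5 := repl_card (G := G₂) (x := z) (y := y) hzy hsep₂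
  have h6 : deg G₂ y = deg G y := repl_deg_y hxy hsxy
  have h7 : deg G₂ z + (G.filter (fun e => x ∈ e ∧ z ∈ e)).card = deg G z :=
    repl_deg_z hxy hsxy hzx hzy hszy
  have h8 := hmax _ (repl_uniform hzy hsep₂ hG₂u) (repl_covFree hzy hsep₂ hG₂cf)
  have ht : 0 < (G.filter (fun e => x ∈ e ∧ z ∈ e)).card := by
    obtain ⟨e, he, hxe, hze⟩ := hadj
    exact Finset.card_pos.mpr ⟨e, Finset.mem_filter.mpr ⟨he, hxe, hze⟩⟩
  omega

lemma exists_coloring (hn0 : 0 < n) (hG : IsUniform k G) (hcf : CovFree n l G)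
    (hmax : ∀ G' : Finset (Finset (Fin n)), IsUniform k G' → CovFree n l G' → G'.card ≤ G.card) :
    ∃ c : Fin n → ℕ, G ⊆ inj n k c ∧ ((Finset.univ : Finset (Fin n)).image c).card ≤ l := by
  classical
  set rel : Fin n → Fin n → Prop := fun v w => v = w ∨ ¬ (∃ e ∈ G, v ∈ e ∧ w ∈ e) with hrel
  have hrefl : ∀ v, rel v v := fun v => Or.inl rfl
  have hsymm : ∀ v w, rel v w → rel w v := by
    rintro v w (rfl | h)
    · exact Or.inl rfl
    · exact Or.inr (fun ⟨e, he, hw, hv⟩ => h ⟨e, he, hv, hw⟩)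
  have htrans : ∀ v w u, rel v w → rel w u → rel v u := by
    rintro v w u (rfl | hvw) hwu
    · exact hwu
    · rcases hwu with rfl | hwu
      · exact Or.inr hvw
      · by_cases hvu : v = u
        · exact Or.inl hvu
        by_cases hvwe : v = w
        · subst hvwe; exact Or.inr hwu
        by_cases hwue : w = u
        · exact (Or.inr (hwue ▸ hvw))
        refine Or.inr (fun hadj => ?_)
        refine no_bad_triple hG hcf hmax (x := v) (y := w) (z := u) hvwe
          (fun h => hwue h.symm) (fun h => hvu h.symm)
          (fun e he h => hvw ⟨e, he, h⟩) (fun e he h => hwu ⟨e, he, h.2, h.1⟩) hadj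
  set c : Fin n → ℕ := fun v =>
    (((Finset.univ : Finset (Fin n)).filter (fun w => rel v w)).min'
      ⟨v, Finset.mem_filter.mpr ⟨Finset.mem_univ v, hrefl v⟩⟩).val with hc
  have hmin : ∀ v, rel v (((Finset.univ : Finset (Fin n)).filter (fun w => rel v w)).min'
      ⟨v, Finset.mem_filter.mpr ⟨Finset.mem_univ v, hrefl v⟩⟩) := by
    intro v
    have := Finset.min'_mem ((Finset.univ : Finset (Fin n)).filter (fun w => rel v w))
      ⟨v, Finset.mem_filter.mpr ⟨Finset.mem_univ v, hrefl v⟩⟩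
    exact (Finset.mem_filter.mp this).2
  have hkey : ∀ v w, c v = c w ↔ rel v w := by
    intro v w
    constructor
    · intro h
      have h' := Fin.val_injective h
      have h1 := hmin v
      have h2 := hmin w
      rw [h'] at h1
      exact htrans _ _ _ h1 (hsymm _ _ h2)
    · intro h
      have hset : (Finset.univ : Finset (Fin n)).filter (fun u => rel v u)
          = (Finset.univ : Finset (Fin n)).filter (fun u => rel w u) := by
        ext u
        simp only [Finset.mem_filter, Finset.mem_univ, true_and]
        exact ⟨fun hvu => htrans _ _ _ (hsymm _ _ h) hvu, fun hwu => htrans _ _ _ h hwu⟩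
      simp only [hc, hset]
  refine ⟨c, ?_, ?_⟩
  · intro e he
    rw [mem_inj]
    refine ⟨hG e he, fun x hx y hy hcxy => ?_⟩
    rcases (hkey x y).mp hcxy with h | h
    · exact h
    · exact absurd ⟨e, he, hx, hy⟩ h
  · by_contra hbig
    push_neg at hbig
    obtain ⟨T, hTsub, hTcard⟩ := Finset.exists_subset_card_eq (s := (Finset.univ : Finset (Fin n)).image c) (n := l + 1) hbig
    set g : ℕ → Fin n := fun s => if h : ∃ v : Fin n, c v = s then h.choose else ⟨0, hn0⟩ with hg
    have hgc : ∀ s ∈ (Finset.univ : Finset (Fin n)).image c, c (g s) = s := by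
      intro s hs
      obtain ⟨v, _, hv⟩ := Finset.mem_image.mp hs
      have hex : ∃ v : Fin n, c v = s := ⟨v, hv⟩
      have hgs : g s = hex.choose := dif_pos hex
      rw [hgs]
      exact hex.choose_spec
    refine hcf ⟨T.image g, ?_, ?_⟩
    · rw [Finset.card_image_of_injOn, hTcard]
      intro s hs t ht hst
      rw [← hgc s (hTsub hs), ← hgc t (hTsub ht), hst]
    · intro x hx y hy hxy
      obtain ⟨s, hs, rfl⟩ := Finset.mem_image.mp hx
      obtain ⟨t, ht, rfl⟩ := Finset.mem_image.mp hy
      have hst : s ≠ t := fun h => hxy (h ▸ rfl)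
      have : c (g s) ≠ c (g t) := by
        rw [hgc s (hTsub hs), hgc t (hTsub ht)]; exact hst
      have hnr : ¬ rel (g s) (g t) := fun h => this ((hkey _ _).mpr h)
      exact not_not.mp (fun h => hnr (Or.inr h))


lemma rainbow (hn0 : 0 < n) (c : Fin n → ℕ) (W : Finset ℕ)
    (hW : W ⊆ (Finset.univ : Finset (Fin n)).image c) :
    ∃ T : Finset (Fin n), T.card = W.card ∧ (∀ x ∈ T, c x ∈ W) ∧ Set.InjOn c ↑T := by
  classical
  set g : ℕ → Fin n := fun s => if h : ∃ v : Fin n, c v = s then h.choose else ⟨0, hn0⟩ with hg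
  have hgc : ∀ s ∈ (Finset.univ : Finset (Fin n)).image c, c (g s) = s := by
    intro s hs
    obtain ⟨v, _, hv⟩ := Finset.mem_image.mp hs
    have hex : ∃ v : Fin n, c v = s := ⟨v, hv⟩
    have hgs : g s = hex.choose := dif_pos hex
    rw [hgs]; exact hex.choose_spec
  refine ⟨W.image g, ?_, ?_, ?_⟩
  · refine Finset.card_image_of_injOn (fun s hs t ht hst => ?_)
    rw [← hgc s (hW hs), ← hgc t (hW ht), hst]
  · intro x hx
    obtain ⟨s, hs, rfl⟩ := Finset.mem_image.mp hx
    rw [hgc s (hW hs)]; exact hs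
  · intro x hx y hy hxy
    rw [Finset.mem_coe, Finset.mem_image] at hx hy
    obtain ⟨s, hs, rfl⟩ := hx
    obtain ⟨t, ht, rfl⟩ := hy
    rw [hgc s (hW hs), hgc t (hW ht)] at hxy
    rw [hxy]

lemma update_image_subset (c : Fin n → ℕ) (v : Fin n) (f : ℕ) :
    (Finset.univ : Finset (Fin n)).image (Function.update c v f)
      ⊆ insert f ((Finset.univ : Finset (Fin n)).image c) := by
  intro s hs
  obtain ⟨w, _, rfl⟩ := Finset.mem_image.mp hs
  by_cases hwv : w = v
  · subst hwv; rw [Function.update_self]; exact Finset.mem_insert_self _ _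
  · rw [Function.update_of_ne hwv]
    exact Finset.mem_insert_of_mem (Finset.mem_image_of_mem c (Finset.mem_univ w))

lemma split_lemma (hn0 : 0 < n) (hk2 : 2 ≤ k) {c : Fin n → ℕ}
    (hm : k ≤ ((Finset.univ : Finset (Fin n)).image c).card)
    {u v : Fin n} (huv : u ≠ v) (hcuv : c u = c v) {f : ℕ}
    (hf : f ∉ (Finset.univ : Finset (Fin n)).image c) :
    (inj n k c).card < (inj n k (Function.update c v f)).card := by
  classical
  set c' := Function.update c v f with hc'
  have hc'v : c' v = f := Function.update_self v f c
  have hc'ne : ∀ w : Fin n, w ≠ v → c' w = c w := fun w hw => Function.update_of_ne hw f c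
  have hmemim : ∀ w : Fin n, c w ∈ (Finset.univ : Finset (Fin n)).image c :=
    fun w => Finset.mem_image_of_mem c (Finset.mem_univ w)
  -- subset
  have hsub : inj n k c ⊆ inj n k c' := by
    intro e he
    rw [mem_inj] at he ⊢
    refine ⟨he.1, fun x hx y hy hxy => ?_⟩
    by_cases hxv : x = v <;> by_cases hyv : y = v
    · rw [hxv, hyv]
    · rw [hxv, hc'v, hc'ne y hyv] at hxy
      exact absurd (hxy ▸ hmemim y) hf
    · rw [hyv, hc'v, hc'ne x hxv] at hxy
      exact absurd (hxy.symm ▸ hmemim x) hf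
    · rw [hc'ne x hxv, hc'ne y hyv] at hxy
      exact he.2 hx hy hxy
  -- the new edge
  obtain ⟨W, hWsub, hWcard⟩ := Finset.exists_subset_card_eq
    (s := ((Finset.univ : Finset (Fin n)).image c).erase (c u)) (n := k - 2)
    (by
      have h1 := Finset.card_erase_of_mem (hmemim u)
      omega)
  have hWim : W ⊆ (Finset.univ : Finset (Fin n)).image c :=
    hWsub.trans (Finset.erase_subset _ _)
  have hWnotu : c u ∉ W := fun h => Finset.notMem_erase (c u) _ (hWsub h)
  obtain ⟨T, hTcard, hTmem, hTinj⟩ := rainbow hn0 c W hWim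
  have hvT : v ∉ T := fun h => hWnotu (hcuv ▸ hTmem v h)
  have huT : u ∉ T := fun h => hWnotu (hTmem u h)
  set estar := insert v (insert u T) with hestar
  have hucard : estar.card = k := by
    rw [hestar, Finset.card_insert_of_notMem (by
        intro h
        rcases Finset.mem_insert.mp h with h | h
        · exact huv h.symm
        · exact hvT h),
      Finset.card_insert_of_notMem huT, hTcard, hWcard]
    omega
  have hestar_mem : estar ∈ inj n k c' := by
    rw [mem_inj]
    refine ⟨hucard, ?_⟩
    intro x hx y hy hxy
    rw [Finset.mem_coe, hestar] at hx hy
    have hinj2 : Set.InjOn c ↑(insert u T) := by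
      intro a ha b hb hab
      rw [Finset.mem_coe, Finset.mem_insert] at ha hb
      rcases ha with rfl | haT <;> rcases hb with rfl | hbT
      · rfl
      · exact absurd (hab ▸ hTmem b hbT) hWnotu
      · exact absurd (hab.symm ▸ hTmem a haT) hWnotu
      · exact hTinj (Finset.mem_coe.mpr haT) (Finset.mem_coe.mpr hbT) hab
    have hcases : ∀ w : Fin n, w ∈ insert v (insert u T) → w = v ∨ (w ≠ v ∧ w ∈ insert u T) := by
      intro w hw
      rcases Finset.mem_insert.mp hw with h | h'
      · exact Or.inl h
      refine Or.inr ⟨?_, h'⟩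
      rcases Finset.mem_insert.mp h' with h | hT
      · rw [h]; exact huv
      · exact fun hh => hvT (hh ▸ hT)
    rcases hcases x hx with hx1 | ⟨hx1, hx2⟩ <;> rcases hcases y hy with hy1 | ⟨hy1, hy2⟩
    · rw [hx1, hy1]
    · rw [hx1, hc'v, hc'ne y hy1] at hxy
      exact absurd (hxy ▸ hmemim y) hf
    · rw [hy1, hc'v, hc'ne x hx1] at hxy
      exact absurd (hxy.symm ▸ hmemim x) hf
    · rw [hc'ne x hx1, hc'ne y hy1] at hxy
      exact hinj2 (Finset.mem_coe.mpr hx2) (Finset.mem_coe.mpr hy2) hxy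
  have hestar_not : estar ∉ inj n k c := by
    rw [mem_inj]
    rintro ⟨-, hinj⟩
    have hu : u ∈ estar := by
      rw [hestar]; exact Finset.mem_insert_of_mem (Finset.mem_insert_self _ _)
    have hv : v ∈ estar := by
      rw [hestar]; exact Finset.mem_insert_self _ _
    exact huv (hinj (Finset.mem_coe.mpr hu) (Finset.mem_coe.mpr hv) hcuv)
  exact Finset.card_lt_card ((Finset.ssubset_iff_of_subset hsub).mpr ⟨estar, hestar_mem, hestar_not⟩)

lemma move_lemma (hn0 : 0 < n) (hk3 : 3 ≤ k) {c : Fin n → ℕ} {i j : ℕ} (hij : i ≠ j)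
    (hm : k ≤ ((Finset.univ : Finset (Fin n)).image c).card)
    (hsz : ((Finset.univ : Finset (Fin n)).filter (fun w => c w = j)).card + 2
      ≤ ((Finset.univ : Finset (Fin n)).filter (fun w => c w = i)).card)
    {v : Fin n} (hv : c v = i) :
    (inj n k c).card < (inj n k (Function.update c v j)).card := by
  classical
  set c' := Function.update c v j with hc'def
  have hc'v : c' v = j := Function.update_self v j c
  have hc'ne : ∀ w : Fin n, w ≠ v → c' w = c w := fun w hw => Function.update_of_ne hw j c
  set Ci := (Finset.univ : Finset (Fin n)).filter (fun w => c w = i) with hCi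
  set Cj := (Finset.univ : Finset (Fin n)).filter (fun w => c w = j) with hCj
  have hvCi : v ∈ Ci := Finset.mem_filter.mpr ⟨Finset.mem_univ v, hv⟩
  have hCie : (Ci.erase v).card = Ci.card - 1 := Finset.card_erase_of_mem hvCi
  obtain ⟨R, hRsub, hRcard⟩ := Finset.exists_subset_card_eq (s := Ci.erase v) (n := Cj.card)
    (by omega)
  have hRmem : ∀ a ∈ R, c a = i ∧ a ≠ v := by
    intro a ha
    have := hRsub ha
    exact ⟨(Finset.mem_filter.mp (Finset.mem_of_mem_erase this)).2, Finset.ne_of_mem_erase this⟩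
  set e1 : {x // x ∈ Cj} ≃ {x // x ∈ R} := Finset.equivOfCardEq hRcard.symm with he1
  set ψ : Fin n → Fin n := fun w => if h : w ∈ Cj then (e1 ⟨w, h⟩).val else w with hψ
  have hψR : ∀ w ∈ Cj, ψ w ∈ R := by
    intro w hw
    have : ψ w = (e1 ⟨w, hw⟩).val := dif_pos hw
    rw [this]; exact (e1 ⟨w, hw⟩).property
  have hψinj : ∀ w ∈ Cj, ∀ w' ∈ Cj, ψ w = ψ w' → w = w' := by
    intro w hw w' hw' hww
    have h1 : ψ w = (e1 ⟨w, hw⟩).val := dif_pos hw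
    have h2 : ψ w' = (e1 ⟨w', hw'⟩).val := dif_pos hw'
    rw [h1, h2] at hww
    have := e1.injective (Subtype.ext hww)
    exact congrArg Subtype.val this
  have hRdiff : ((Ci.erase v) \ R).Nonempty := by
    rw [← Finset.card_pos, Finset.card_sdiff_of_subset hRsub]
    omega
  obtain ⟨u₁, hu₁⟩ := hRdiff
  have hu₁Ci : u₁ ∈ Ci.erase v := (Finset.mem_sdiff.mp hu₁).1
  have hu₁R : u₁ ∉ R := (Finset.mem_sdiff.mp hu₁).2
  have hu₁i : c u₁ = i := (Finset.mem_filter.mp (Finset.mem_of_mem_erase hu₁Ci)).2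
  have hu₁v : u₁ ≠ v := Finset.ne_of_mem_erase hu₁Ci
  -- rainbow side set
  have hmemim : ∀ w : Fin n, c w ∈ (Finset.univ : Finset (Fin n)).image c :=
    fun w => Finset.mem_image_of_mem c (Finset.mem_univ w)
  obtain ⟨W, hWsub, hWcard⟩ := Finset.exists_subset_card_eq
    (s := ((Finset.univ : Finset (Fin n)).image c) \ {i, j}) (n := k - 2)
    (by
      have h1 := Finset.card_le_card_sdiff_add_card
        (s := (Finset.univ : Finset (Fin n)).image c) (t := ({i, j} : Finset ℕ))
      have h2 : ({i, j} : Finset ℕ).card ≤ 2 := Finset.card_insert_le i {j} |>.trans (by simp)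
      omega)
  have hWim : W ⊆ (Finset.univ : Finset (Fin n)).image c :=
    hWsub.trans (Finset.sdiff_subset)
  have hWi : i ∉ W := fun h => ((Finset.mem_sdiff.mp (hWsub h)).2) (by simp)
  have hWj : j ∉ W := fun h => ((Finset.mem_sdiff.mp (hWsub h)).2) (by simp)
  obtain ⟨T, hTcard, hTmem, hTinj⟩ := rainbow hn0 c W hWim
  have hvT : v ∉ T := fun h => hWi (hv ▸ hTmem v h)
  have hu₁T : u₁ ∉ T := fun h => hWi (hu₁i ▸ hTmem u₁ h)
  have hTR : ∀ x ∈ T, x ∉ R := fun x hx hxR => hWi ((hRmem x hxR).1 ▸ hTmem x hx)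
  set estar := insert v (insert u₁ T) with hestar
  have hestar_card : estar.card = k := by
    rw [hestar, Finset.card_insert_of_notMem (by
        intro h
        rcases Finset.mem_insert.mp h with h | h
        · exact hu₁v h.symm
        · exact hvT h),
      Finset.card_insert_of_notMem hu₁T, hTcard, hWcard]
    omega
  have hestar_R : ∀ a ∈ estar, a ∉ R := by
    intro a ha haR
    rw [hestar] at ha
    rcases Finset.mem_insert.mp ha with rfl | ha'
    · exact (hRmem a haR).2 rfl
    rcases Finset.mem_insert.mp ha' with rfl | haT
    · exact hu₁R haR
    · exact hTR a haT haR
  have hestar_mem : estar ∈ inj n k c' := by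
    rw [mem_inj]
    refine ⟨hestar_card, ?_⟩
    intro x hx y hy hxy
    rw [Finset.mem_coe, hestar] at hx hy
    have hval : ∀ w : Fin n, w ∈ insert v (insert u₁ T) →
        (w = v ∧ c' w = j) ∨ (w = u₁ ∧ c' w = i) ∨ (w ∈ T ∧ c' w ∈ W) := by
      intro w hw
      rcases Finset.mem_insert.mp hw with h | h'
      · exact Or.inl ⟨h, by rw [h, hc'v]⟩
      rcases Finset.mem_insert.mp h' with h | hT
      · refine Or.inr (Or.inl ⟨h, ?_⟩)
        have : w ≠ v := by rw [h]; exact hu₁v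
        rw [hc'ne w this, h, hu₁i]
      · refine Or.inr (Or.inr ⟨hT, ?_⟩)
        have : w ≠ v := fun hh => hvT (hh ▸ hT)
        rw [hc'ne w this]; exact hTmem w hT
    rcases hval x hx with ⟨hx1, hx2⟩ | ⟨hx1, hx2⟩ | ⟨hx1, hx2⟩ <;>
      rcases hval y hy with ⟨hy1, hy2⟩ | ⟨hy1, hy2⟩ | ⟨hy1, hy2⟩
    · rw [hx1, hy1]
    · rw [hx2, hy2] at hxy; exact absurd hxy.symm hij
    · rw [hx2] at hxy; exact absurd (hxy ▸ hy2) hWj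
    · rw [hx2, hy2] at hxy; exact absurd hxy hij
    · rw [hx1, hy1]
    · rw [hx2] at hxy; exact absurd (hxy ▸ hy2) hWi
    · rw [hy2] at hxy; exact absurd (hxy.symm ▸ hx2) hWj
    · rw [hy2] at hxy; exact absurd (hxy.symm ▸ hx2) hWi
    · have hxv : x ≠ v := fun hh => hvT (hh ▸ hx1)
      have hyv : y ≠ v := fun hh => hvT (hh ▸ hy1)
      rw [hc'ne x hxv, hc'ne y hyv] at hxy
      exact hTinj (Finset.mem_coe.mpr hx1) (Finset.mem_coe.mpr hy1) hxy
  -- the shifting map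
  set Φ : Finset (Fin n) → Finset (Fin n) := fun e =>
    if v ∈ e then
      (if h : (e.filter (fun w => c w = j)).Nonempty then
        insert (ψ h.choose) (e.erase h.choose) else e)
    else e with hΦ
  have hΦ_nv : ∀ e : Finset (Fin n), v ∉ e → Φ e = e := by
    intro e he; rw [hΦ]; simp only [if_neg he]
  have hΦ_e : ∀ e : Finset (Fin n), v ∈ e → ¬(e.filter (fun w => c w = j)).Nonempty → Φ e = e := by
    intro e he hne; rw [hΦ]; simp only [if_pos he, dif_neg hne]
  have hΦ_c : ∀ e : Finset (Fin n), v ∈ e → (h : (e.filter (fun w => c w = j)).Nonempty) →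
      Φ e = insert (ψ h.choose) (e.erase h.choose) := by
    intro e he h; rw [hΦ]; simp only [if_pos he, dif_pos h]
  -- facts about edges containing v with a j-colored vertex
  have hCfacts : ∀ e, e ∈ inj n k c → v ∈ e → (h : (e.filter (fun w => c w = j)).Nonempty) →
      h.choose ∈ e ∧ c h.choose = j ∧ h.choose ≠ v ∧ h.choose ∈ Cj ∧ ψ h.choose ∉ e := by
    intro e he hve h
    have hw := h.choose_spec
    rw [Finset.mem_filter] at hw
    have hwv : h.choose ≠ v := fun hh => hij ((hh ▸ hw.2 : c v = j) ▸ hv.symm ▸ rfl)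
    have hwCj : h.choose ∈ Cj := Finset.mem_filter.mpr ⟨Finset.mem_univ _, hw.2⟩
    refine ⟨hw.1, hw.2, hwv, hwCj, ?_⟩
    intro hmem
    have hci : c (ψ h.choose) = i := (hRmem _ (hψR _ hwCj)).1
    have := (mem_inj.mp he).2 (Finset.mem_coe.mpr hmem) (Finset.mem_coe.mpr hve)
      (by rw [hci, hv])
    exact (hRmem _ (hψR _ hwCj)).2 this
  -- no-j-edge containing v has no i-vertex except v, no R vertex
  have hBfacts : ∀ e, e ∈ inj n k c → v ∈ e → ∀ a ∈ e, a ≠ v → c a ≠ i ∧ a ∉ R := by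
    intro e he hve a ha hav
    have hci : c a ≠ i := by
      intro h
      exact hav ((mem_inj.mp he).2 (Finset.mem_coe.mpr ha) (Finset.mem_coe.mpr hve) (by rw [h, hv]))
    exact ⟨hci, fun haR => hci (hRmem a haR).1⟩
  -- Φ maps inj c into (inj c').erase estar
  have hmaps : ∀ e ∈ inj n k c, Φ e ∈ (inj n k c').erase estar := by
    intro e he
    obtain ⟨hek, hei⟩ := mem_inj.mp he
    rw [Finset.mem_erase]
    by_cases hve : v ∈ e
    · by_cases hne : (e.filter (fun w => c w = j)).Nonempty
      · obtain ⟨hwe, hwc, hwv, hwCj, hψe⟩ := hCfacts e he hve hne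
        rw [hΦ_c e hve hne]
        have hψR' := hψR _ hwCj
        have hψv : ψ hne.choose ≠ v := (hRmem _ hψR').2
        have hψi : c (ψ hne.choose) = i := (hRmem _ hψR').1
        constructor
        · intro hcon
          exact hestar_R _ (hcon ▸ (Finset.mem_insert_self _ _)) hψR'
        rw [mem_inj]
        constructor
        · rw [Finset.card_insert_of_notMem (fun hh => hψe (Finset.mem_of_mem_erase hh)),
            Finset.card_erase_of_mem hwe, hek]
          have : 0 < k := by omega
          omega
        intro x hx y hy hxy
        rw [Finset.mem_coe, Finset.mem_insert] at hx hy
        have hval : ∀ w : Fin n, w = ψ hne.choose ∨ w ∈ e.erase hne.choose →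
            (w = ψ hne.choose ∧ c' w = i) ∨ (w = v ∧ c' w = j) ∨
            (w ∈ e ∧ w ≠ v ∧ w ≠ hne.choose ∧ c' w = c w ∧ c w ≠ i ∧ c w ≠ j) := by
          intro w hw
          rcases hw with rfl | hw'
          · exact Or.inl ⟨rfl, by rw [hc'ne _ hψv, hψi]⟩
          · have hwe' : w ∈ e := Finset.mem_of_mem_erase hw'
            have hwne : w ≠ hne.choose := Finset.ne_of_mem_erase hw'
            by_cases hwv' : w = v
            · exact Or.inr (Or.inl ⟨hwv', by rw [hwv', hc'v]⟩)
            · refine Or.inr (Or.inr ⟨hwe', hwv', hwne, hc'ne w hwv', ?_, ?_⟩)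
              · intro hh
                exact hwv' (hei (Finset.mem_coe.mpr hwe') (Finset.mem_coe.mpr hve) (by rw [hh, hv]))
              · intro hh
                exact hwne (hei (Finset.mem_coe.mpr hwe') (Finset.mem_coe.mpr hwe) (by rw [hh, hwc]))
        rcases hval x hx with ⟨hx1, hx2⟩ | ⟨hx1, hx2⟩ | ⟨hx1, hx2, hx3, hx4, hx5, hx6⟩ <;>
          rcases hval y hy with ⟨hy1, hy2⟩ | ⟨hy1, hy2⟩ | ⟨hy1, hy2, hy3, hy4, hy5, hy6⟩
        · rw [hx1, hy1]
        · rw [hx2, hy2] at hxy; exact absurd hxy hij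
        · rw [hx2, hy4] at hxy; exact absurd hxy.symm hy5
        · rw [hx2, hy2] at hxy; exact absurd hxy.symm hij
        · rw [hx1, hy1]
        · rw [hx2, hy4] at hxy; exact absurd hxy.symm hy6
        · rw [hx4, hy2] at hxy; exact absurd hxy hx5
        · rw [hx4, hy2] at hxy; exact absurd hxy hx6
        · rw [hx4, hy4] at hxy
          exact hei (Finset.mem_coe.mpr hx1) (Finset.mem_coe.mpr hy1) hxy
      · -- case B
        rw [hΦ_e e hve hne]
        constructor
        · intro hcon
          have : u₁ ∈ e := by
            rw [hcon, hestar]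
            exact Finset.mem_insert_of_mem (Finset.mem_insert_self _ _)
          exact (hBfacts e he hve u₁ this hu₁v).1 hu₁i
        rw [mem_inj]
        refine ⟨hek, ?_⟩
        intro x hx y hy hxy
        rw [Finset.mem_coe] at hx hy
        have hval : ∀ w : Fin n, w ∈ e → (w = v ∧ c' w = j) ∨
            (w ≠ v ∧ c' w = c w ∧ c w ≠ j) := by
          intro w hw
          by_cases hwv : w = v
          · exact Or.inl ⟨hwv, by rw [hwv, hc'v]⟩
          · refine Or.inr ⟨hwv, hc'ne w hwv, ?_⟩
            intro hh
            exact hne ⟨w, Finset.mem_filter.mpr ⟨hw, hh⟩⟩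
        rcases hval x hx with ⟨hx1, hx2⟩ | ⟨hx1, hx2, hx3⟩ <;>
          rcases hval y hy with ⟨hy1, hy2⟩ | ⟨hy1, hy2, hy3⟩
        · rw [hx1, hy1]
        · rw [hx2, hy2] at hxy; exact absurd hxy.symm hy3
        · rw [hx2, hy2] at hxy; exact absurd hxy hx3
        · rw [hx2, hy2] at hxy
          exact hei (Finset.mem_coe.mpr hx) (Finset.mem_coe.mpr hy) hxy
    · -- case A
      rw [hΦ_nv e hve]
      constructor
      · intro hcon
        exact hve (by rw [hcon, hestar]; exact Finset.mem_insert_self _ _)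
      rw [mem_inj]
      refine ⟨hek, ?_⟩
      intro x hx y hy hxy
      have hxv : x ≠ v := fun hh => hve (hh ▸ (Finset.mem_coe.mp hx))
      have hyv : y ≠ v := fun hh => hve (hh ▸ (Finset.mem_coe.mp hy))
      rw [hc'ne x hxv, hc'ne y hyv] at hxy
      exact hei hx hy hxy
  -- Φ is injective on inj c
  have hΦinj : Set.InjOn Φ ↑(inj n k c) := by
    intro e he e' he' hΦeq
    rw [Finset.mem_coe] at he he'
    have hvmem : ∀ d, d ∈ inj n k c → (v ∈ Φ d ↔ v ∈ d) := by
      intro d hd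
      by_cases hvd : v ∈ d
      · by_cases hnd : (d.filter (fun w => c w = j)).Nonempty
        · obtain ⟨hwe, hwc, hwv, hwCj, hψe⟩ := hCfacts d hd hvd hnd
          rw [hΦ_c d hvd hnd]
          simp only [Finset.mem_insert, Finset.mem_erase]
          exact ⟨fun _ => hvd, fun _ => Or.inr ⟨Ne.symm hwv, hvd⟩⟩
        · rw [hΦ_e d hvd hnd]
      · rw [hΦ_nv d hvd]
    by_cases hve : v ∈ e <;> by_cases hve' : v ∈ e'
    · by_cases hne : (e.filter (fun w => c w = j)).Nonempty <;>
        by_cases hne' : (e'.filter (fun w => c w = j)).Nonempty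
      · obtain ⟨hwe, hwc, hwv, hwCj, hψe⟩ := hCfacts e he hve hne
        obtain ⟨hwe', hwc', hwv', hwCj', hψe'⟩ := hCfacts e' he' hve' hne'
        have hmemψ : ψ hne.choose ∈ Φ e' := by
          rw [← hΦeq, hΦ_c e hve hne]; exact Finset.mem_insert_self _ _
        rw [hΦ_c e' hve' hne'] at hmemψ
        have hweq : hne.choose = hne'.choose := by
          rcases Finset.mem_insert.mp hmemψ with h | h
          · exact hψinj _ hwCj _ hwCj' h
          · exfalso
            have haR := hψR _ hwCj
            exact (hBfacts e' he' hve' _ (Finset.mem_of_mem_erase h)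
              ((hRmem _ haR).2)).2 haR
        rw [hΦ_c e hve hne, hΦ_c e' hve' hne', ← hweq] at hΦeq
        have hx1 : ψ hne.choose ∉ e.erase hne.choose :=
          fun h => hψe (Finset.mem_of_mem_erase h)
        have hx2 : ψ hne.choose ∉ e'.erase hne.choose := by
          intro h
          exact (hweq ▸ hψe') (Finset.mem_of_mem_erase h)
        have herase : e.erase hne.choose = e'.erase hne.choose := by
          have := congrArg (fun s => Finset.erase s (ψ hne.choose)) hΦeq
          simpa [Finset.erase_insert hx1, Finset.erase_insert hx2] using this
        have h1 := Finset.insert_erase hwe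
        have h2 := Finset.insert_erase (hweq ▸ hwe' : hne.choose ∈ e')
        rw [← h1, ← h2, herase]
      · exfalso
        have hmemψ : ψ hne.choose ∈ Φ e' := by
          rw [← hΦeq, hΦ_c e hve hne]; exact Finset.mem_insert_self _ _
        rw [hΦ_e e' hve' hne'] at hmemψ
        obtain ⟨hwe, hwc, hwv, hwCj, hψe⟩ := hCfacts e he hve hne
        have haR := hψR _ hwCj
        exact (hBfacts e' he' hve' _ hmemψ ((hRmem _ haR).2)).2 haR
      · exfalso
        have hmemψ : ψ hne'.choose ∈ Φ e := by
          rw [hΦeq, hΦ_c e' hve' hne']; exact Finset.mem_insert_self _ _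
        rw [hΦ_e e hve hne] at hmemψ
        obtain ⟨hwe', hwc', hwv', hwCj', hψe'⟩ := hCfacts e' he' hve' hne'
        have haR := hψR _ hwCj'
        exact (hBfacts e he hve _ hmemψ ((hRmem _ haR).2)).2 haR
      · rw [hΦ_e e hve hne, hΦ_e e' hve' hne'] at hΦeq
        exact hΦeq
    · exfalso
      have := (hvmem e he).mpr hve
      rw [hΦeq] at this
      exact hve' ((hvmem e' he').mp this)
    · exfalso
      have := (hvmem e' he').mpr hve'
      rw [← hΦeq] at this
      exact hve ((hvmem e he).mp this)
    · rw [hΦ_nv e hve, hΦ_nv e' hve'] at hΦeq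
      exact hΦeq
  have hmaps' : ∀ e ∈ inj n k c, Φ e ∈ (inj n k c').erase estar := hmaps
  have hcard1 : (inj n k c).card ≤ ((inj n k c').erase estar).card :=
    Finset.card_le_card_of_injOn Φ hmaps' hΦinj
  have hcard2 : ((inj n k c').erase estar).card = (inj n k c').card - 1 :=
    Finset.card_erase_of_mem hestar_mem
  have hpos : 0 < (inj n k c').card := Finset.card_pos.mpr ⟨estar, hestar_mem⟩
  omega

lemma div_mod_unique' {l : ℕ} (hl : 0 < l) {a q r : ℕ} (h : a = l * q + r) (hr : r < l) :
    a / l = q ∧ a % l = r := by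
  subst h
  constructor
  · rw [Nat.mul_add_div hl, Nat.div_eq_of_lt hr, add_zero]
  · rw [Nat.mul_add_mod, Nat.mod_eq_of_lt hr]

lemma range_mod_card {l : ℕ} (hl : 0 < l) {r : ℕ} (hr : r < l) (N : ℕ) :
    ((Finset.range N).filter (fun v => v % l = r)).card
      = N / l + if r < N % l then 1 else 0 := by
  induction N with
  | zero => simp
  | succ N ih =>
    rw [Finset.range_add_one, Finset.filter_insert]
    have hmod : N % l < l := Nat.mod_lt N hl
    have hdiv : l * (N / l) + N % l = N := Nat.div_add_mod N l
    by_cases hNl : N % l + 1 = l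
    · obtain ⟨hd, hm⟩ := div_mod_unique' hl
        (show N + 1 = l * (N / l + 1) + 0 by
          have : l * (N / l + 1) = l * (N / l) + l := by ring
          omega) hl
      by_cases hNr : N % l = r
      · rw [if_pos hNr, Finset.card_insert_of_notMem (by simp), ih]
        rw [hd, hm]
        split_ifs <;> omega
      · rw [if_neg hNr, ih, hd, hm]
        split_ifs <;> omega
    · have hlt : N % l + 1 < l := by omega
      obtain ⟨hd, hm⟩ := div_mod_unique' hl
        (show N + 1 = l * (N / l) + (N % l + 1) by omega) hlt
      by_cases hNr : N % l = r
      · rw [if_pos hNr, Finset.card_insert_of_notMem (by simp), ih]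
        rw [hd, hm]
        split_ifs <;> omega
      · rw [if_neg hNr, ih, hd, hm]
        split_ifs <;> omega

lemma fin_filter_card {N : ℕ} (P : ℕ → Prop) [DecidablePred P] :
    ((Finset.univ : Finset (Fin N)).filter (fun v => P v.val)).card
      = ((Finset.range N).filter P).card := by
  apply Finset.card_bij (fun v _ => v.val)
  · intro v hv
    simp only [Finset.mem_filter, Finset.mem_range, Finset.mem_univ, true_and] at hv ⊢
    exact ⟨v.isLt, hv⟩
  · intro a _ b _ h
    exact Fin.val_injective h
  · intro b hb
    simp only [Finset.mem_filter, Finset.mem_range] at hb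
    exact ⟨⟨b, hb.1⟩, by simp only [Finset.mem_filter, Finset.mem_univ, true_and]; exact hb.2, rfl⟩

lemma bal {S : Finset ℕ} {f : ℕ → ℕ} {N L : ℕ} (hcard : S.card = L) (hl : 0 < L)
    (hsum : ∑ s ∈ S, f s = N) (hbal : ∀ s ∈ S, ∀ t ∈ S, f s ≤ f t + 1) :
    (∀ s ∈ S, f s = N / L ∨ f s = N / L + 1) ∧
      (S.filter (fun s => f s = N / L + 1)).card = N % L := by
  have hS : S.Nonempty := Finset.card_pos.mp (by omega)
  obtain ⟨s₀, hs₀, hmin⟩ := Finset.exists_min_image S f hS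
  set m := f s₀ with hm
  have hrange : ∀ s ∈ S, f s = m ∨ f s = m + 1 := by
    intro s hs
    have h1 := hmin s hs
    have h2 := hbal s hs s₀ hs₀
    omega
  set b := (S.filter (fun s => f s = m + 1)).card with hb
  have hsplit := Finset.card_filter_add_card_filter_not
    (s := S) (p := fun s => f s = m + 1)
  have e1 : ∑ s ∈ S.filter (fun s => f s = m + 1), f s = (m + 1) * b := by
    rw [Finset.sum_congr rfl (fun s hs => (Finset.mem_filter.mp hs).2), Finset.sum_const,
      smul_eq_mul, mul_comm]
  have e2 : ∑ s ∈ S.filter (fun s => ¬ f s = m + 1), f s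
      = m * (S.filter (fun s => ¬ f s = m + 1)).card := by
    rw [Finset.sum_congr rfl (fun s hs => by
        rcases hrange s (Finset.mem_filter.mp hs).1 with h1 | h1
        · exact h1
        · exact absurd h1 (Finset.mem_filter.mp hs).2), Finset.sum_const, smul_eq_mul, mul_comm]
  have hsum2 : N = L * m + b := by
    rw [← hsum, ← Finset.sum_filter_add_sum_filter_not S (fun s => f s = m + 1), e1, e2]
    have hmul : m * (S.filter (fun s => ¬ f s = m + 1)).card + m * b = m * L := by
      rw [← Nat.mul_add]
      congr 1
      omega
    have : (m + 1) * b = m * b + b := by ring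
    have h2 : L * m = m * L := by ring
    omega
  have hble : b ≤ L := by
    rw [← hcard]
    exact Finset.card_filter_le _ _
  by_cases hbl : b < L
  · obtain ⟨hd, hmod⟩ := div_mod_unique' hl hsum2 hbl
    constructor
    · intro s hs
      rw [hd]
      exact hrange s hs
    · rw [hd, hmod, ← hb]
  · have hbL : b = L := by omega
    have hfilter : S.filter (fun s => f s = m + 1) = S :=
      Finset.eq_of_subset_of_card_le (Finset.filter_subset _ _) (by omega)
    have hall : ∀ s ∈ S, f s = m + 1 := by
      intro s hs
      rw [← hfilter] at hs
      exact (Finset.mem_filter.mp hs).2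
    have hsum3 : N = L * (m + 1) + 0 := by
      have : L * (m + 1) = L * m + L := by ring
      omega
    obtain ⟨hd, hmod⟩ := div_mod_unique' hl hsum3 hl
    constructor
    · intro s hs
      rw [hd]
      exact Or.inl (hall s hs)
    · rw [hd, hmod]
      have : S.filter (fun s => f s = m + 1 + 1) = ∅ := by
        apply Finset.filter_false_of_mem
        intro s hs
        have := hall s hs
        omega
      rw [this, Finset.card_empty]

lemma exists_beta {S T : Finset ℕ} {f g : ℕ → ℕ} {a : ℕ}
    (hST : S.card = T.card)
    (hfS : ∀ s ∈ S, f s = a ∨ f s = a + 1) (hgT : ∀ t ∈ T, g t = a ∨ g t = a + 1)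
    (hcnt : (S.filter (fun s => f s = a + 1)).card = (T.filter (fun t => g t = a + 1)).card) :
    ∃ β : ℕ → ℕ, Set.InjOn β ↑S ∧ (∀ s ∈ S, β s ∈ T) ∧ (∀ s ∈ S, g (β s) = f s) := by
  classical
  set B := S.filter (fun s => f s = a + 1) with hB
  set B₀ := T.filter (fun t => g t = a + 1) with hB₀
  have h1 : (S \ B).card = (T \ B₀).card := by
    rw [Finset.card_sdiff_of_subset (Finset.filter_subset _ _),
      Finset.card_sdiff_of_subset (Finset.filter_subset _ _), hST, hcnt]
  set e1 : {x // x ∈ B} ≃ {x // x ∈ B₀} := Finset.equivOfCardEq hcnt with he1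
  set e2 : {x // x ∈ S \ B} ≃ {x // x ∈ T \ B₀} := Finset.equivOfCardEq h1 with he2
  set β : ℕ → ℕ := fun s =>
    if h : s ∈ B then (e1 ⟨s, h⟩).val
    else if h2 : s ∈ S \ B then (e2 ⟨s, h2⟩).val else 0 with hβ
  have hval1 : ∀ s (h : s ∈ B), β s = (e1 ⟨s, h⟩).val := by
    intro s h; rw [hβ]; simp only [dif_pos h]
  have hval2 : ∀ s (h : s ∈ S \ B), β s = (e2 ⟨s, h⟩).val := by
    intro s h
    have hsB : s ∉ B := (Finset.mem_sdiff.mp h).2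
    rw [hβ]; simp only [dif_neg hsB, dif_pos h]
  have hcase : ∀ s ∈ S, (∃ h : s ∈ B, β s ∈ B₀) ∨ (∃ h : s ∈ S \ B, β s ∈ T \ B₀) := by
    intro s hs
    by_cases h : s ∈ B
    · exact Or.inl ⟨h, by rw [hval1 s h]; exact (e1 ⟨s, h⟩).property⟩
    · have h2 : s ∈ S \ B := Finset.mem_sdiff.mpr ⟨hs, h⟩
      exact Or.inr ⟨h2, by rw [hval2 s h2]; exact (e2 ⟨s, h2⟩).property⟩
  refine ⟨β, ?_, ?_, ?_⟩
  · intro s hs t ht hst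
    rw [Finset.mem_coe] at hs ht
    rcases hcase s hs with ⟨h, hmem⟩ | ⟨h, hmem⟩ <;> rcases hcase t ht with ⟨h', hmem'⟩ | ⟨h', hmem'⟩
    · rw [hval1 s h, hval1 t h'] at hst
      exact congrArg Subtype.val (e1.injective (Subtype.ext hst))
    · rw [hst] at hmem
      exact absurd hmem (fun hh => (Finset.mem_sdiff.mp hmem').2 ((hB₀ ▸ hh : _)))
    · rw [← hst] at hmem'
      exact absurd hmem' (fun hh => (Finset.mem_sdiff.mp hmem).2 hh)
    · rw [hval2 s h, hval2 t h'] at hst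
      exact congrArg Subtype.val (e2.injective (Subtype.ext hst))
  · intro s hs
    rcases hcase s hs with ⟨h, hmem⟩ | ⟨h, hmem⟩
    · exact Finset.filter_subset _ _ hmem
    · exact (Finset.mem_sdiff.mp hmem).1
  · intro s hs
    rcases hcase s hs with ⟨h, hmem⟩ | ⟨h, hmem⟩
    · rw [(Finset.mem_filter.mp hmem).2, (Finset.mem_filter.mp h).2]
    · have hfs : f s = a := by
        have h1 := hfS s hs
        have h2 := (Finset.mem_sdiff.mp h).2
        rw [hB] at h2
        simp only [Finset.mem_filter] at h2
        rcases h1 with h1 | h1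
        · exact h1
        · exact absurd ⟨hs, h1⟩ h2
      have hgs : g (β s) = a := by
        obtain ⟨hT, hnB₀⟩ := Finset.mem_sdiff.mp hmem
        have h1 := hgT _ hT
        rw [hB₀] at hnB₀
        simp only [Finset.mem_filter] at hnB₀
        rcases h1 with h1 | h1
        · exact h1
        · exact absurd ⟨hT, h1⟩ hnB₀
      rw [hfs, hgs]

lemma exists_perm {n : ℕ} (c d : Fin n → ℕ)
    (h : ∀ s : ℕ, ((Finset.univ : Finset (Fin n)).filter (fun v => c v = s)).card
      = ((Finset.univ : Finset (Fin n)).filter (fun v => d v = s)).card) :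
    ∃ σ : Fin n ≃ Fin n, ∀ v, d (σ v) = c v := by
  classical
  have hcard : ∀ s : ℕ, Fintype.card {v : Fin n // c v = s} = Fintype.card {v : Fin n // d v = s} := by
    intro s
    rw [Fintype.card_subtype, Fintype.card_subtype]
    exact h s
  set E : (s : ℕ) → {v : Fin n // c v = s} ≃ {v : Fin n // d v = s} :=
    fun s => Fintype.equivOfCardEq (hcard s) with hE
  refine ⟨(Equiv.sigmaFiberEquiv c).symm.trans
    ((Equiv.sigmaCongrRight E).trans (Equiv.sigmaFiberEquiv d)), fun v => ?_⟩
  exact (E (c v) ⟨v, rfl⟩).property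

lemma inj_image_equiv {n k : ℕ} {c d : Fin n → ℕ} (σ : Fin n ≃ Fin n)
    (h : ∀ v w : Fin n, c v = c w ↔ d (σ v) = d (σ w)) :
    (inj n k c).image (fun e => e.image σ) = inj n k d := by
  classical
  ext e'
  simp only [Finset.mem_image]
  constructor
  · rintro ⟨e, he, rfl⟩
    obtain ⟨hek, hei⟩ := mem_inj.mp he
    rw [mem_inj]
    refine ⟨by rw [Finset.card_image_of_injective _ σ.injective]; exact hek, ?_⟩
    intro x hx y hy hxy
    rw [Finset.coe_image] at hx hy
    obtain ⟨a, ha, rfl⟩ := hx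
    obtain ⟨b, hb, rfl⟩ := hy
    exact congrArg σ (hei ha hb ((h a b).mpr hxy))
  · intro he'
    obtain ⟨hek, hei⟩ := mem_inj.mp he'
    refine ⟨e'.image σ.symm, ?_, ?_⟩
    · rw [mem_inj]
      refine ⟨by rw [Finset.card_image_of_injective _ σ.symm.injective]; exact hek, ?_⟩
      intro x hx y hy hxy
      rw [Finset.coe_image] at hx hy
      obtain ⟨a, ha, rfl⟩ := hx
      obtain ⟨b, hb, rfl⟩ := hy
      have h2 : d (σ (σ.symm a)) = d (σ (σ.symm b)) := (h _ _).mp hxy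
      rw [σ.apply_symm_apply, σ.apply_symm_apply] at h2
      rw [hei ha hb h2]
    · show (e'.image σ.symm).image σ = e'
      rw [Finset.image_image]
      rw [show ((fun v => σ v) ∘ fun v => σ.symm v) = id from funext (fun a => σ.apply_symm_apply a)]
      exact Finset.image_id

lemma turan_nonempty (hk3 : 3 ≤ k) (hkl : k ≤ l) (hln : l ≤ n) :
    (inj n k (fun v : Fin n => v.val % l)).Nonempty := by
  have hn0 : 0 < n := by omega
  have hW : Finset.range k ⊆ (Finset.univ : Finset (Fin n)).image (fun v : Fin n => v.val % l) := by
    intro s hs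
    have hsk : s < k := Finset.mem_range.mp hs
    refine Finset.mem_image.mpr ⟨⟨s, by omega⟩, Finset.mem_univ _, ?_⟩
    show s % l = s
    exact Nat.mod_eq_of_lt (by omega)
  obtain ⟨T, hTcard, _, hTinj⟩ := rainbow hn0 (fun v : Fin n => v.val % l) (Finset.range k) hW
  refine ⟨T, mem_inj.mpr ⟨?_, hTinj⟩⟩
  rw [hTcard, Finset.card_range]

end Stmt1Aux

/-- for `n ≥ l ≥ k ≥ 3`, `T^(k)(n,l)` has the covering-free property and is,
up to isomorphism, the unique maximum-size `k`-graph on `n` vertices with that property. -/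
theorem stmt1 (n l k : ℕ) (hk : 3 ≤ k) (hl : k ≤ l) (hn : l ≤ n) :
    (IsUniform k (turan n l k) ∧
      (¬ ∃ L : Finset (Fin n), L.card = l + 1 ∧ ∀ x ∈ L, ∀ y ∈ L, x ≠ y → ∃ e ∈ turan n l k, x ∈ e ∧ y ∈ e)) ∧
    (∀ G : Finset (Finset (Fin n)), IsUniform k G →
      (¬ ∃ L : Finset (Fin n), L.card = l + 1 ∧ ∀ x ∈ L, ∀ y ∈ L, x ≠ y → ∃ e ∈ G, x ∈ e ∧ y ∈ e) →
      (∀ G' : Finset (Finset (Fin n)), IsUniform k G' →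
        (¬ ∃ L : Finset (Fin n), L.card = l + 1 ∧ ∀ x ∈ L, ∀ y ∈ L, x ≠ y → ∃ e ∈ G', x ∈ e ∧ y ∈ e) → G'.card ≤ G.card) →
      ∃ σ : Fin n ≃ Fin n, G.image (fun e => e.image σ) = turan n l k) := by
  classical
  have hl0 : 0 < l := by omega
  have hn0 : 0 < n := by omega
  have hpart1u : IsUniform k (turan n l k) := by
    rw [Stmt1Aux.turan_eq]; exact Stmt1Aux.inj_uniform _
  have him₀le : ((Finset.univ : Finset (Fin n)).image (fun v : Fin n => v.val % l)).card ≤ l := by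
    have hsub : (Finset.univ : Finset (Fin n)).image (fun v : Fin n => v.val % l)
        ⊆ Finset.range l := by
      intro s hs
      obtain ⟨v, _, rfl⟩ := Finset.mem_image.mp hs
      exact Finset.mem_range.mpr (Nat.mod_lt _ hl0)
    have := Finset.card_le_card hsub
    rwa [Finset.card_range] at this
  have hpart1c : Stmt1Aux.CovFree n l (turan n l k) := by
    rw [Stmt1Aux.turan_eq]; exact Stmt1Aux.inj_covFree him₀le
  refine ⟨⟨hpart1u, hpart1c⟩, ?_⟩
  intro G hGu hGcf hmax
  have hGcf' : Stmt1Aux.CovFree n l G := hGcf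
  have hmax' : ∀ G' : Finset (Finset (Fin n)), IsUniform k G' →
      Stmt1Aux.CovFree n l G' → G'.card ≤ G.card :=
    fun G' h1 h2 => hmax G' h1 h2
  obtain ⟨c, hGsub, hSle⟩ := Stmt1Aux.exists_coloring hn0 hGu hGcf' hmax'
  have hinjc_le := hmax' _ (Stmt1Aux.inj_uniform c) (Stmt1Aux.inj_covFree (k := k) hSle)
  have hGeq : G = Stmt1Aux.inj n k c := Finset.eq_of_subset_of_card_le hGsub hinjc_le
  have hc1 : G.card = (Stmt1Aux.inj n k c).card := by rw [hGeq]
  have hturan_le : (turan n l k).card ≤ G.card := hmax' _ hpart1u hpart1c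
  have hturan_pos : 0 < (turan n l k).card := by
    obtain ⟨e, he⟩ := Stmt1Aux.turan_nonempty (n := n) hk hl hn
    rw [Stmt1Aux.turan_eq]
    exact Finset.card_pos.mpr ⟨e, he⟩
  have hSk : k ≤ ((Finset.univ : Finset (Fin n)).image c).card := by
    have hpos : 0 < (Stmt1Aux.inj n k c).card := by omega
    obtain ⟨e, he⟩ := Finset.card_pos.mp hpos
    obtain ⟨hek, hei⟩ := Stmt1Aux.mem_inj.mp he
    have h1 : (e.image c).card = e.card := Finset.card_image_iff.mpr hei
    have h2 : e.image c ⊆ (Finset.univ : Finset (Fin n)).image c := by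
      intro s hs
      obtain ⟨v, _, rfl⟩ := Finset.mem_image.mp hs
      exact Finset.mem_image_of_mem c (Finset.mem_univ v)
    have := Finset.card_le_card h2
    omega
  have hsum : ∑ s ∈ (Finset.univ : Finset (Fin n)).image c,
      ((Finset.univ : Finset (Fin n)).filter (fun v => c v = s)).card = n := by
    have := Finset.card_eq_sum_card_fiberwise (f := c)
      (s := (Finset.univ : Finset (Fin n))) (t := (Finset.univ : Finset (Fin n)).image c)
      (fun v _ => Finset.mem_image_of_mem c (Finset.mem_univ v))
    rw [Finset.card_univ, Fintype.card_fin] at this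
    exact this.symm
  have hScard : ((Finset.univ : Finset (Fin n)).image c).card = l := by
    by_contra hne
    have hlt : ((Finset.univ : Finset (Fin n)).image c).card < l := lt_of_le_of_ne hSle hne
    have hbig : ∃ s ∈ (Finset.univ : Finset (Fin n)).image c,
        2 ≤ ((Finset.univ : Finset (Fin n)).filter (fun v => c v = s)).card := by
      by_contra hsmall
      push_neg at hsmall
      have hle : ∑ s ∈ (Finset.univ : Finset (Fin n)).image c,
          ((Finset.univ : Finset (Fin n)).filter (fun v => c v = s)).card
          ≤ ∑ _s ∈ (Finset.univ : Finset (Fin n)).image c, 1 :=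
        Finset.sum_le_sum (fun s hs => by have := hsmall s hs; omega)
      rw [Finset.sum_const, smul_eq_mul, mul_one] at hle
      omega
    obtain ⟨s, hs, hfs⟩ := hbig
    obtain ⟨u, hu, v, hv, huv⟩ := Finset.one_lt_card.mp
      (show 1 < ((Finset.univ : Finset (Fin n)).filter (fun v => c v = s)).card by omega)
    have hcu : c u = s := (Finset.mem_filter.mp hu).2
    have hcv : c v = s := (Finset.mem_filter.mp hv).2
    have hFS : (((Finset.univ : Finset (Fin n)).image c).sup id + 1) ∉ (Finset.univ : Finset (Fin n)).image c := by
      intro h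
      have := Finset.le_sup (f := id) h
      simp only [id] at this
      omega
    have hsplit := Stmt1Aux.split_lemma hn0 (by omega) hSk huv (hcu.trans hcv.symm) hFS
    have himsub := Stmt1Aux.update_image_subset c v (((Finset.univ : Finset (Fin n)).image c).sup id + 1)
    have himle : ((Finset.univ : Finset (Fin n)).image
        (Function.update c v (((Finset.univ : Finset (Fin n)).image c).sup id + 1))).card ≤ l := by
      have h1 := Finset.card_le_card himsub
      rw [Finset.card_insert_of_notMem hFS] at h1
      omega
    have := hmax' _ (Stmt1Aux.inj_uniform _) (Stmt1Aux.inj_covFree (k := k) himle)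
    omega
  have hbalanced : ∀ s ∈ (Finset.univ : Finset (Fin n)).image c,
      ∀ t ∈ (Finset.univ : Finset (Fin n)).image c,
      ((Finset.univ : Finset (Fin n)).filter (fun v => c v = s)).card
        ≤ ((Finset.univ : Finset (Fin n)).filter (fun v => c v = t)).card + 1 := by
    by_contra hbad
    push_neg at hbad
    obtain ⟨s, hs, t, ht, hst⟩ := hbad
    have hstne : s ≠ t := fun h => by rw [h] at hst; omega
    have hclassne : 0 < ((Finset.univ : Finset (Fin n)).filter (fun v => c v = s)).card := by omega
    obtain ⟨v, hv⟩ := Finset.card_pos.mp hclassne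
    have hcv : c v = s := (Finset.mem_filter.mp hv).2
    have hmove := Stmt1Aux.move_lemma hn0 hk (i := s) (j := t) hstne hSk (by omega) hcv
    have himsub := Stmt1Aux.update_image_subset c v t
    have himle : ((Finset.univ : Finset (Fin n)).image (Function.update c v t)).card ≤ l := by
      have h1 := Finset.card_le_card himsub
      rw [Finset.insert_eq_self.mpr ht] at h1
      omega
    have := hmax' _ (Stmt1Aux.inj_uniform _) (Stmt1Aux.inj_covFree (k := k) himle)
    omega
  obtain ⟨hvals, hcount⟩ := Stmt1Aux.bal
    (f := fun s => ((Finset.univ : Finset (Fin n)).filter (fun v => c v = s)).card)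
    hScard hl0 hsum hbalanced
  have hres : ∀ r, r < l →
      ((Finset.univ : Finset (Fin n)).filter (fun v => v.val % l = r)).card
        = n / l + if r < n % l then 1 else 0 := by
    intro r hr
    rw [Stmt1Aux.fin_filter_card (fun m => m % l = r)]
    exact Stmt1Aux.range_mod_card hl0 hr n
  have hmodlt : n % l < l := Nat.mod_lt n hl0
  have hgvals : ∀ t ∈ Finset.range l,
      ((Finset.univ : Finset (Fin n)).filter (fun v => v.val % l = t)).card = n / l ∨
      ((Finset.univ : Finset (Fin n)).filter (fun v => v.val % l = t)).card = n / l + 1 := by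
    intro t ht
    rw [hres t (Finset.mem_range.mp ht)]
    split_ifs
    · exact Or.inr rfl
    · exact Or.inl (by omega)
  have hgcnt : ((Finset.range l).filter (fun t =>
      ((Finset.univ : Finset (Fin n)).filter (fun v => v.val % l = t)).card = n / l + 1)).card
      = n % l := by
    have heq : (Finset.range l).filter (fun t =>
        ((Finset.univ : Finset (Fin n)).filter (fun v => v.val % l = t)).card = n / l + 1)
        = Finset.range (n % l) := by
      ext r
      simp only [Finset.mem_filter, Finset.mem_range]
      constructor
      · rintro ⟨h1, h2⟩
        rw [hres r h1] at h2
        split_ifs at h2 with h3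
        · exact h3
        · omega
      · intro h1
        have hrl : r < l := by omega
        refine ⟨hrl, ?_⟩
        rw [hres r hrl, if_pos h1]
    rw [heq, Finset.card_range]
  obtain ⟨β, hβinj, hβmaps, hβval⟩ := Stmt1Aux.exists_beta (T := Finset.range l)
    (g := fun t => ((Finset.univ : Finset (Fin n)).filter (fun v => v.val % l = t)).card)
    (by rw [hScard, Finset.card_range]) hvals hgvals (by rw [hcount, hgcnt])
  have hβim : ((Finset.univ : Finset (Fin n)).image c).image β = Finset.range l := by
    apply Finset.eq_of_subset_of_card_le
    · intro t ht
      obtain ⟨s, hs, rfl⟩ := Finset.mem_image.mp ht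
      exact hβmaps s hs
    · rw [Finset.card_range, Finset.card_image_of_injOn hβinj, hScard]
  have hperm_hyp : ∀ s : ℕ,
      ((Finset.univ : Finset (Fin n)).filter (fun v => β (c v) = s)).card
        = ((Finset.univ : Finset (Fin n)).filter (fun v => v.val % l = s)).card := by
    intro s
    by_cases hsl : s ∈ Finset.range l
    · obtain ⟨t, htS, hts⟩ := Finset.mem_image.mp (hβim ▸ hsl)
      have hfeq : ((Finset.univ : Finset (Fin n)).filter (fun v => β (c v) = s))
          = (Finset.univ : Finset (Fin n)).filter (fun v => c v = t) := by
        apply Finset.filter_congr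
        intro v _
        constructor
        · intro h
          exact hβinj (Finset.mem_coe.mpr (Finset.mem_image_of_mem c (Finset.mem_univ v)))
            (Finset.mem_coe.mpr htS) (h.trans hts.symm)
        · intro h
          rw [h, hts]
      rw [hfeq]
      have hgb := hβval t htS
      rw [hts] at hgb
      exact hgb.symm
    · have h1 : ((Finset.univ : Finset (Fin n)).filter (fun v => β (c v) = s)) = ∅ := by
        apply Finset.filter_false_of_mem
        intro v _ h
        exact hsl (h ▸ hβmaps (c v) (Finset.mem_image_of_mem c (Finset.mem_univ v)))
      have h2 : ((Finset.univ : Finset (Fin n)).filter (fun v : Fin n => v.val % l = s)) = ∅ := by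
        apply Finset.filter_false_of_mem
        intro v _ h
        exact hsl (h ▸ Finset.mem_range.mpr (Nat.mod_lt _ hl0))
      rw [h1, h2]
  obtain ⟨σ, hσ⟩ := Stmt1Aux.exists_perm (fun v => β (c v)) (fun v : Fin n => v.val % l) hperm_hyp
  refine ⟨σ, ?_⟩
  rw [hGeq, Stmt1Aux.turan_eq]
  apply Stmt1Aux.inj_image_equiv
  intro v w
  constructor
  · intro h
    rw [hσ v, hσ w, h]
  · intro h
    rw [hσ v, hσ w] at h
    exact hβinj (Finset.mem_coe.mpr (Finset.mem_image_of_mem c (Finset.mem_univ v)))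
      (Finset.mem_coe.mpr (Finset.mem_image_of_mem c (Finset.mem_univ w))) h
end

section
/- For fixed l ≥ k ≥ 1, the function n ↦ |T^{(k)}(n,l)| / C(n,k) is non-increasing in n (for n ≥ k), where |T^{(k)}(n,l)| is the number of k-sets in [n] meeting each of l almost-equal parts in at most one vertex. -/
open Finset

/-!
The edges of `T^{(k)}(n,l)` are the transversals of its parts, so their number is the elementary
symmetric polynomial `e_k` of the part sizes. Passing from `n` to `n + 1` adds a vertex to a
smallest part, of size `a` say, and every other part has size at most `a + 1`. As
`C(n+1,k) / C(n,k) = (n+1) / (n+1-k)`, it suffices that `(n+1-k) e_k(a+1, t) ≤ (n+1) e_k(a, t)`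
for the multiset `t` of the other sizes. Expanding `e_k` in its first variable reduces this to the
Newton-type inequality `(Σ t) e_j(t) ≤ (j+1) e_{j+1}(t) + j b e_j(t)` for entries of `t` bounded
by `b = a + 1`, which follows by induction on `t`.
-/

namespace Multiset

variable {R : Type*} [CommSemiring R]

@[simp] theorem esymm_zero (s : Multiset R) : s.esymm 0 = 1 := by
  simp [esymm, powersetCard_zero_left]

theorem esymm_one (s : Multiset R) : s.esymm 1 = s.sum := by
  simp [esymm, powersetCard_one]

theorem esymm_cons_succ (a : R) (s : Multiset R) (k : ℕ) :
    (a ::ₘ s).esymm (k + 1) = s.esymm (k + 1) + a * s.esymm k := by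
  simp [esymm, powersetCard_cons, sum_map_mul_left]

theorem sum_mul_esymm_le {t : Multiset ℕ} {b : ℕ} (ht : ∀ x ∈ t, x ≤ b) (j : ℕ) :
    t.sum * t.esymm j ≤ (j + 1) * t.esymm (j + 1) + j * b * t.esymm j := by
  induction t using Multiset.induction_on generalizing j with
  | empty => cases j <;> simp [esymm, powersetCard_zero_right]
  | cons x u ih =>
    have hx : x ≤ b := ht x (mem_cons_self x u)
    have ih := fun j => ih (fun y hy => ht y (mem_cons_of_mem hy)) j
    cases j with
    | zero => simp [esymm_one]
    | succ j =>
      rw [esymm_cons_succ, esymm_cons_succ, sum_cons]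
      have h1 := ih (j + 1)
      have h2 := Nat.mul_le_mul_left x (ih j)
      -- after the two inductive hypotheses, what is left is `x² e_j(u) ≤ b x e_j(u)`
      have h3 := Nat.mul_le_mul_right (x * u.esymm j) hx
      linarith

theorem sub_mul_esymm_cons_succ_le {a : ℕ} {t : Multiset ℕ} (ht : ∀ x ∈ t, x ≤ a + 1)
    (k : ℕ) :
    (a + t.sum + 1 - k) * ((a + 1) ::ₘ t).esymm k ≤ (a + t.sum + 1) * (a ::ₘ t).esymm k := by
  cases k with
  | zero => simp
  | succ j =>
    have key := sum_mul_esymm_le ht j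
    rw [esymm_cons_succ, esymm_cons_succ]
    rcases le_or_gt j (a + t.sum) with hj | hj
    · obtain ⟨m, hm⟩ := Nat.exists_eq_add_of_le hj
      have hsub : a + t.sum + 1 - (j + 1) = m := by omega
      have hmul := congrArg (· * t.esymm j) hm
      simp only [add_mul] at hmul
      rw [hsub, hm]
      linarith
    · rw [Nat.sub_eq_zero_of_le (by omega), zero_mul]
      exact Nat.zero_le _

end Multiset

section Transversals

variable {V ι : Type*} [DecidableEq ι]

def transversals (p : V → ι) (S : Finset V) (B : Finset ι) : Finset (Finset V) :=
  {e ∈ S.powerset | e.image p = B ∧ #e = #B}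

@[simp] theorem mem_transversals {p : V → ι} {S : Finset V} {B : Finset ι} {e : Finset V} :
    e ∈ transversals p S B ↔ e ⊆ S ∧ e.image p = B ∧ #e = #B := by
  simp [transversals]

theorem notMem_of_mem_transversals {p : V → ι} {S : Finset V} {B : Finset ι} {e : Finset V}
    (he : e ∈ transversals p S B) {v : V} (hv : p v ∉ B) : v ∉ e :=
  fun hve => hv ((mem_transversals.mp he).2.1 ▸ mem_image_of_mem p hve)

variable [DecidableEq V]

theorem image_erase_of_injOn {p : V → ι} {e : Finset V} (hp : Set.InjOn p e) {v : V}
    (hv : v ∈ e) : (e.erase v).image p = (e.image p).erase (p v) := by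
  ext w
  simp only [mem_image, mem_erase]
  constructor
  · rintro ⟨u, ⟨huv, hu⟩, rfl⟩
    exact ⟨fun h => huv (hp hu hv h), u, hu, rfl⟩
  · rintro ⟨hw, u, hu, rfl⟩
    exact ⟨u, ⟨fun h => hw (h ▸ rfl), hu⟩, rfl⟩

theorem transversals_insert (p : V → ι) (S : Finset V) {j : ι} {B : Finset ι} (hj : j ∉ B) :
    transversals p S (insert j B) =
      ({v ∈ S | p v = j} ×ˢ transversals p S B).image fun x => insert x.1 x.2 := by
  ext e
  simp only [mem_transversals, mem_image, mem_product, mem_filter, Prod.exists]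
  constructor
  · rintro ⟨heS, himg, hcard⟩
    have hp : Set.InjOn p e := card_image_iff.mp (by rw [himg, hcard])
    obtain ⟨v, hv, rfl⟩ := mem_image.mp (himg ▸ mem_insert_self j B)
    refine ⟨v, e.erase v, ⟨⟨heS hv, rfl⟩, (erase_subset v e).trans heS, ?_, ?_⟩,
      insert_erase hv⟩
    · rw [image_erase_of_injOn hp hv, himg, erase_insert hj]
    · rw [card_erase_of_mem hv, hcard, card_insert_of_notMem hj, Nat.add_sub_cancel]
  · rintro ⟨v, e', ⟨⟨hvS, rfl⟩, he'S, himg, hcard⟩, rfl⟩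
    have hve' : v ∉ e' := fun h => hj (himg ▸ mem_image_of_mem p h)
    refine ⟨insert_subset hvS he'S, by rw [image_insert, himg], ?_⟩
    rw [card_insert_of_notMem hve', card_insert_of_notMem hj, hcard]

theorem injOn_insert_transversals (p : V → ι) (S : Finset V) {j : ι} {B : Finset ι}
    (hj : j ∉ B) : Set.InjOn (fun x : V × Finset V => insert x.1 x.2)
      ↑({v ∈ S | p v = j} ×ˢ transversals p S B) := by
  rintro ⟨v, e⟩ hve ⟨w, e'⟩ hwe' h
  simp only [coe_product, Set.mem_prod, mem_coe, coe_filter, Set.mem_ofPred_eq] at hve hwe' h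
  have hv : v ∉ e := notMem_of_mem_transversals hve.2 (hve.1.2 ▸ hj)
  have hw : w ∉ e' := notMem_of_mem_transversals hwe'.2 (hwe'.1.2 ▸ hj)
  obtain rfl : v = w := by
    rcases mem_insert.mp (h ▸ mem_insert_self v e) with hvw | hve'
    · exact hvw
    · exact absurd hve' (notMem_of_mem_transversals hwe'.2 (hve.1.2 ▸ hj))
  rw [← erase_insert hv, h, erase_insert hw]

theorem card_transversals (p : V → ι) (S : Finset V) (B : Finset ι) :
    #(transversals p S B) = ∏ i ∈ B, #{v ∈ S | p v = i} := by
  induction B using Finset.induction_on with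
  | empty => simp [transversals, filter_eq', image_eq_empty]
  | @insert j B hj ih =>
    rw [transversals_insert p S hj, card_image_of_injOn (injOn_insert_transversals p S hj),
      card_product, prod_insert hj, ih]

theorem card_filter_card_image_eq_card (p : V → ι) (S : Finset V) {A : Finset ι}
    (hS : ∀ v ∈ S, p v ∈ A) (k : ℕ) :
    #{e ∈ S.powersetCard k | #(e.image p) = #e} =
      (A.val.map fun i => #{v ∈ S | p v = i}).esymm k := by
  have hmaps : ∀ e ∈ {e ∈ S.powersetCard k | #(e.image p) = #e},
      e.image p ∈ A.powersetCard k := by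
    intro e he
    simp only [mem_filter, mem_powersetCard] at he
    refine mem_powersetCard.mpr ⟨fun i hi => ?_, he.2.trans he.1.2⟩
    obtain ⟨v, hv, rfl⟩ := mem_image.mp hi
    exact hS v (he.1.1 hv)
  rw [card_eq_sum_card_fiberwise hmaps, esymm_map_val]
  refine sum_congr rfl fun B hB => ?_
  rw [← card_transversals]
  congr 1
  ext e
  have hBk := (mem_powersetCard.mp hB).2
  simp only [mem_filter, mem_powersetCard, mem_transversals]
  constructor
  · rintro ⟨⟨⟨heS, hk⟩, -⟩, himg⟩
    exact ⟨heS, himg, hk.trans hBk.symm⟩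
  · rintro ⟨heS, himg, hk⟩
    exact ⟨⟨⟨heS, hk.trans hBk⟩, by rw [himg, hk]⟩, himg⟩

end Transversals

theorem card_filter_val_mod_eq (n l i : ℕ) :
    #{v : Fin n | v.val % l = i} = n.count (· % l = i) := by
  rw [Nat.count_eq_card_filter_range, ← Nat.Iio_eq_range, ← Fin.map_valEmbedding_univ,
    filter_map, card_map]
  rfl

theorem count_mod_eq_of_lt {l : ℕ} (hl : 0 < l) (n : ℕ) {i : ℕ} (hi : i < l) :
    n.count (· % l = i) = n / l + if i < n % l then 1 else 0 := by
  simpa [Nat.ModEq, Nat.mod_eq_of_lt hi] using Nat.count_modEq_card n hl i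

theorem sum_count_mod_eq {l : ℕ} (hl : 0 < l) (n : ℕ) :
    ∑ i ∈ range l, n.count (· % l = i) = n := by
  simp only [Nat.count_eq_card_filter_range]
  rw [← card_eq_sum_card_fiberwise (fun x _ => mem_range.mpr (Nat.mod_lt x hl)), card_range]

theorem card_turan {l : ℕ} (hl : 0 < l) (n k : ℕ) :
    #(turan n l k) = ((range l).val.map fun i => n.count (· % l = i)).esymm k := by
  simp only [← card_filter_val_mod_eq]
  exact card_filter_card_image_eq_card (fun v : Fin n => v.val % l) univ
    (fun v _ => mem_range.mpr (Nat.mod_lt _ hl)) k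

theorem sub_mul_card_turan_succ_le {l : ℕ} (hl : 0 < l) (n k : ℕ) :
    (n + 1 - k) * #(turan (n + 1) l k) ≤ (n + 1) * #(turan n l k) := by
  set c : ℕ → ℕ → ℕ := fun m i => m.count (· % l = i)
  -- the new vertex `n` joins part `r`, which is a smallest part
  set r := n % l
  have hr : r ∈ range l := mem_range.mpr (Nat.mod_lt n hl)
  have hval : (range l).val = r ::ₘ ((range l).erase r).val := by
    rw [← insert_val_of_notMem (notMem_erase r _), insert_erase hr]
  set t := ((range l).erase r).val.map (c n)
  have hsucc : (range l).val.map (c (n + 1)) = (c n r + 1) ::ₘ t := by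
    rw [hval, Multiset.map_cons]
    congr 1
    · simp [c, Nat.count_succ, r]
    · refine Multiset.map_congr rfl fun i hi => ?_
      have hir : n % l ≠ i := (ne_of_mem_erase (mem_val.mp hi)).symm
      simp [c, Nat.count_succ, hir]
  have hmin : c n r = n / l := by
    simp [c, count_mod_eq_of_lt hl n (Nat.mod_lt n hl), r]
  have hsum : c n r + t.sum = n := (add_sum_erase _ (c n) hr).trans (sum_count_mod_eq hl n)
  have hbound : ∀ x ∈ t, x ≤ c n r + 1 := by
    simp only [t, Multiset.mem_map, forall_exists_index, and_imp, forall_apply_eq_imp_iff₂]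
    intro i hi
    rw [hmin]
    simp only [c]
    rw [count_mod_eq_of_lt hl n (mem_range.mp (mem_of_mem_erase hi))]
    split_ifs <;> omega
  rw [card_turan hl, card_turan hl, hsucc, hval, Multiset.map_cons]
  simpa only [hsum] using Multiset.sub_mul_esymm_cons_succ_le hbound k

theorem card_turan_succ_div_choose_le {l : ℕ} (hl : 0 < l) {n k : ℕ} (hn : k ≤ n) :
    (#(turan (n + 1) l k) : ℝ) / ((n + 1).choose k : ℝ) ≤
      (#(turan n l k) : ℝ) / (n.choose k : ℝ) := by
  rw [div_le_div_iff₀ (by exact_mod_cast Nat.choose_pos (by omega))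
    (by exact_mod_cast Nat.choose_pos hn)]
  refine mod_cast Nat.le_of_mul_le_mul_left (?_ : (n + 1 - k) * _ ≤ (n + 1 - k) * _)
    (by omega : 0 < n + 1 - k)
  calc (n + 1 - k) * (#(turan (n + 1) l k) * n.choose k)
      = (n + 1 - k) * #(turan (n + 1) l k) * n.choose k := by ring
    _ ≤ (n + 1) * #(turan n l k) * n.choose k :=
      Nat.mul_le_mul_right _ (sub_mul_card_turan_succ_le hl n k)
    _ = #(turan n l k) * (n.choose k * (n + 1)) := by ring
    _ = (n + 1 - k) * (#(turan n l k) * (n + 1).choose k) := by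
      rw [Nat.choose_mul_succ_eq]; ring

/-- for fixed `l ≥ k ≥ 1`, the edge density `|T^(k)(n,l)| / C(n,k)` is
non-increasing in `n` for `n ≥ k`. -/
theorem stmt2 (l k : ℕ) (hk : 1 ≤ k) (hl : k ≤ l) :
    ∀ m n : ℕ, k ≤ m → m ≤ n →
      ((turan n l k).card : ℝ) / (n.choose k : ℝ) ≤ ((turan m l k).card : ℝ) / (m.choose k : ℝ) := by
  intro m n hm hmn
  exact antitoneOn_nat_Ici_of_succ_le (f := fun n => (#(turan n l k) : ℝ) / (n.choose k : ℝ))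
    (fun n hn => card_turan_succ_div_choose_le (hk.trans hl) hn) hm (hm.trans hmn) hmn
end

section
/- Let G be a k-uniform hypergraph on vertex set V with |V| = n and suppose there exists an l-set L ⊆ V such that for every pair {x,y} ⊆ L, the number of edges of G containing both x and y exceeds m = (l + (k−2)·C(l,2)) · C(n, k−3). Then G contains a copy of H_l^{(k)} with core L, i.e., there exist edges D_{xy} ∈ G for each pair {x,y} ⊆ L such that x,y ∈ D_{xy} and the sets D_{xy} \ {x,y} are pairwise disjoint and disjoint from L. -/
open Finset

/-!
Greedy embedding. Take the pairs of `L` one at a time and, for the current pair `{x, y}`, let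
`T` be `L` together with all enlarging sets chosen so far, so `#T ≤ l + (k - 2)·C(l, 2)`. An edge
through `x` and `y` that meets `T` outside `{x, y}` contains some triple `{x, y, v}` with `v ∈ T`,
and at most `C(n, k - 3)` edges contain a given triple. Hence fewer than
`#T · C(n, k - 3)` edges through `{x, y}` are blocked, and a usable edge remains.
-/

section Greedy

variable {V : Type*} [Fintype V] [DecidableEq V] {k : ℕ} {G : Finset (Finset V)}

theorem card_filter_superset_le (hG : IsUniform k G) (S : Finset V) :
    #(G.filter (S ⊆ ·)) ≤ (Fintype.card V).choose (k - #S) := by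
  calc #(G.filter (S ⊆ ·)) ≤ #((univ : Finset V).powersetCard (k - #S)) :=
        card_le_card_of_injOn (· \ S) (fun e he => ?_)
          ((superset_injOn_sdiff S).mono fun e he => (mem_filter.1 he).2)
    _ = (Fintype.card V).choose (k - #S) := by rw [card_powersetCard, card_univ]
  obtain ⟨heG, hSe⟩ := mem_filter.1 he
  exact mem_powersetCard.2 ⟨subset_univ _, by rw [card_sdiff_of_subset hSe, hG e heG]⟩

theorem card_filter_superset_not_disjoint_le (hG : IsUniform k G) (S T : Finset V) :
    #(G.filter fun e => S ⊆ e ∧ ¬Disjoint (e \ S) T) ≤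
      #T * (Fintype.card V).choose (k - #S - 1) := by
  calc #(G.filter fun e => S ⊆ e ∧ ¬Disjoint (e \ S) T)
      ≤ #((T \ S).biUnion fun v => G.filter (insert v S ⊆ ·)) := card_le_card fun e he => ?_
    _ ≤ #(T \ S) * (Fintype.card V).choose (k - #S - 1) :=
        card_biUnion_le_card_mul _ _ _ fun v hv => by
          simpa [card_insert_of_notMem (mem_sdiff.1 hv).2, Nat.sub_sub] using
            card_filter_superset_le hG (insert v S)
    _ ≤ #T * (Fintype.card V).choose (k - #S - 1) := by gcongr; exact sdiff_subset
  obtain ⟨heG, hSe, hmeet⟩ := mem_filter.1 he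
  obtain ⟨v, hv, hvT⟩ := not_disjoint_iff.1 hmeet
  obtain ⟨hve, hvS⟩ := mem_sdiff.1 hv
  exact mem_biUnion.2 ⟨v, mem_sdiff.2 ⟨hvT, hvS⟩, mem_filter.2 ⟨heG, insert_subset hve hSe⟩⟩

theorem exists_mem_superset_disjoint_sdiff (hG : IsUniform k G) (S T : Finset V)
    (hdense : #T * (Fintype.card V).choose (k - #S - 1) < #(G.filter (S ⊆ ·))) :
    ∃ e ∈ G, S ⊆ e ∧ Disjoint (e \ S) T := by
  by_contra! hblocked
  refine hdense.not_ge (le_trans (card_le_card fun e he => ?_)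
    (card_filter_superset_not_disjoint_le hG S T))
  obtain ⟨heG, hSe⟩ := mem_filter.1 he
  exact mem_filter.2 ⟨heG, hSe, hblocked e heG hSe⟩

theorem exists_pairwiseDisjoint_sdiff (hG : IsUniform k G) {r : ℕ} (A : Finset V)
    (P : Finset (Finset V)) (hP : ∀ p ∈ P, #p = r)
    (hdense : ∀ p ∈ P, (#A + (k - r) * #P) * (Fintype.card V).choose (k - r - 1) <
      #(G.filter (p ⊆ ·))) :
    ∃ D : Finset V → Finset V, (∀ p ∈ P, D p ∈ G ∧ p ⊆ D p ∧ Disjoint (D p \ p) A) ∧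
      (P : Set (Finset V)).PairwiseDisjoint fun p => D p \ p := by
  induction P using Finset.induction_on with
  | empty => exact ⟨fun _ => ∅, by simp⟩
  | @insert p Q hpQ ih =>
    have hQdense : ∀ q ∈ Q, (#A + (k - r) * #Q) * (Fintype.card V).choose (k - r - 1) <
        #(G.filter (q ⊆ ·)) := fun q hq => lt_of_le_of_lt (by gcongr; exact subset_insert p Q)
          (hdense q (mem_insert_of_mem hq))
    obtain ⟨D, hD, hDdisj⟩ := ih (fun q hq => hP q (mem_insert_of_mem hq)) hQdense
    set T := A ∪ Q.biUnion fun q => D q \ q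
    have hT : #T ≤ #A + (k - r) * #Q := by
      refine (card_union_le _ _).trans (Nat.add_le_add_left ?_ _)
      rw [mul_comm]
      refine card_biUnion_le_card_mul _ _ _ fun q hq => ?_
      obtain ⟨hqG, hqD, -⟩ := hD q hq
      rw [card_sdiff_of_subset hqD, hG _ hqG, hP q (mem_insert_of_mem hq)]
    obtain ⟨e, heG, hpe, heT⟩ := exists_mem_superset_disjoint_sdiff hG p T <| by
      rw [hP p (mem_insert_self p Q)]
      refine lt_of_le_of_lt ?_ (hdense p (mem_insert_self p Q))
      rw [card_insert_of_notMem hpQ, mul_add_one]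
      gcongr
      omega
    have hDQ : ∀ q ∈ Q, Function.update D p e q = D q := fun q hq =>
      Function.update_of_ne (ne_of_mem_of_not_mem hq hpQ) _ _
    refine ⟨Function.update D p e, fun q hq => ?_, ?_⟩
    · rcases mem_insert.1 hq with rfl | hq
      · simpa using ⟨heG, hpe, disjoint_of_subset_right subset_union_left heT⟩
      · simpa [hDQ q hq] using hD q hq
    · rw [coe_insert]
      refine (hDdisj.mono_on fun q hq => (congrArg (· \ q) (hDQ q hq)).le).insert
        fun q hq _ => ?_
      rw [Function.update_self, hDQ q hq]
      exact disjoint_of_subset_right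
        ((subset_biUnion_of_mem (fun q => D q \ q) hq).trans subset_union_right) heT

end Greedy

theorem stmt7_general (n l k : ℕ) (G : Finset (Finset (Fin n))) (hG : IsUniform k G)
    (L : Finset (Fin n)) (hL : L.card = l)
    (hdense : ∀ x ∈ L, ∀ y ∈ L, x ≠ y →
      (l + (k - 2) * l.choose 2) * n.choose (k - 3) <
        (G.filter (fun e => x ∈ e ∧ y ∈ e)).card) :
    ∃ D : Fin n → Fin n → Finset (Fin n),
      (∀ x ∈ L, ∀ y ∈ L, x ≠ y →
        D x y ∈ G ∧ x ∈ D x y ∧ y ∈ D x y ∧ D x y = D y x ∧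
          Disjoint (D x y \ {x, y}) L) ∧
      (∀ x ∈ L, ∀ y ∈ L, ∀ a ∈ L, ∀ b ∈ L, x ≠ y → a ≠ b →
        ({x, y} : Finset (Fin n)) ≠ {a, b} →
        Disjoint (D x y \ {x, y}) (D a b \ {a, b})) := by
  have hpair : ∀ x ∈ L, ∀ y ∈ L, x ≠ y → ({x, y} : Finset (Fin n)) ∈ L.powersetCard 2 :=
    fun x hx y hy hxy => mem_powersetCard.2 ⟨insert_subset hx (singleton_subset_iff.2 hy),
      card_pair hxy⟩
  obtain ⟨D, hD, hDdisj⟩ := exists_pairwiseDisjoint_sdiff hG L (L.powersetCard 2)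
    (fun p hp => (mem_powersetCard.1 hp).2) fun p hp => by
      obtain ⟨x, y, hxy, rfl⟩ := card_eq_two.1 (mem_powersetCard.1 hp).2
      obtain ⟨hx, hy⟩ := insert_subset_iff.1 (mem_powersetCard.1 hp).1
      simpa [hL, Nat.sub_sub, insert_subset_iff] using
        hdense x hx y (singleton_subset_iff.1 hy) hxy
  refine ⟨fun x y => D {x, y}, fun x hx y hy hxy => ?_,
    fun x hx y hy a ha b hb hxy hab hne => hDdisj (hpair x hx y hy hxy) (hpair a ha b hb hab) hne⟩
  obtain ⟨hDG, hxyD, hDL⟩ := hD _ (hpair x hx y hy hxy)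
  exact ⟨hDG, insert_subset_iff.1 hxyD |>.1, singleton_subset_iff.1 (insert_subset_iff.1 hxyD).2,
    congrArg D (pair_comm x y), hDL⟩

/-- if every pair of an `l`-set `L` lies in more than
`(l + (k-2)·C(l,2))·C(n,k-3)` edges of a `k`-uniform `G` on `n` vertices, then `G` contains a
copy of `H_l^(k)` with core `L`. -/
theorem stmt7 (n l k : ℕ) (hk : 3 ≤ k) (G : Finset (Finset (Fin n))) (hG : IsUniform k G)
    (L : Finset (Fin n)) (hL : L.card = l)
    (hdense : ∀ x ∈ L, ∀ y ∈ L, x ≠ y →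
      (l + (k - 2) * l.choose 2) * n.choose (k - 3) <
        (G.filter (fun e => x ∈ e ∧ y ∈ e)).card) :
    ∃ D : Fin n → Fin n → Finset (Fin n),
      (∀ x ∈ L, ∀ y ∈ L, x ≠ y →
        D x y ∈ G ∧ x ∈ D x y ∧ y ∈ D x y ∧ D x y = D y x ∧
          Disjoint (D x y \ {x, y}) L) ∧
      (∀ x ∈ L, ∀ y ∈ L, ∀ a ∈ L, ∀ b ∈ L, x ≠ y → a ≠ b →
        ({x, y} : Finset (Fin n)) ≠ {a, b} →
        Disjoint (D x y \ {x, y}) (D a b \ {a, b})) :=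
  stmt7_general n l k G hG L hL hdense
end

section
/- Let G and T be k-uniform hypergraphs on the same n-vertex set, where T is the complete l-partite k-graph determined by a partition V₁ ∪ ⋯ ∪ V_l maximizing f = Σ_{D ∈ G} |{i ∈ [l] : D ∩ V_i ≠ ∅}| over all partitions into l parts. If G is c·C(n,k)-close to T^{(k)}(n,l) for some c > 0, then |G \ T| ≤ ck·C(n,k). -/
open Finset

/-! Describe a partition by its index function `g` and write `f(g) = Σ_{D ∈ G} |g(D)|`.
An edge that meets some part twice loses a colour, so `f(P) + |G \ T| ≤ k|G|`. Pulling the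
residue colouring of `T^(k)(n,l)` back along the relabelling `σ` gives a partition under which
every edge `D` with `σ(D) ∈ T^(k)(n,l)` keeps all `k` colours, so
`k|G| ≤ f(Q) + k·#{D ∈ G | σ(D) ∉ T^(k)(n,l)}`, and these edges inject into the symmetric
difference. Maximality, `f(Q) ≤ f(P)`, joins the two bounds. -/

lemma exists_fun_mem_iff_of_existsUnique {α ι : Type*} {P : ι → Finset α}
    (hP : ∀ v, ∃! i, v ∈ P i) : ∃ g : α → ι, ∀ v i, v ∈ P i ↔ g v = i := by
  choose g hg hg_unique using hP
  exact ⟨g, fun v i => ⟨fun h => (hg_unique v i h).symm, fun h => h ▸ hg v⟩⟩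

lemma filter_inter_nonempty_eq_image {α ι : Type*} [DecidableEq α] [Fintype ι] [DecidableEq ι]
    {P : ι → Finset α} {g : α → ι} (hg : ∀ v i, v ∈ P i ↔ g v = i) (D : Finset α) :
    univ.filter (fun i => (D ∩ P i).Nonempty) = D.image g := by
  ext i
  simp only [mem_filter, mem_univ, true_and, mem_image, Finset.Nonempty, mem_inter, hg]

lemma sum_card_image_le_of_maximal {α ι : Type*} [DecidableEq α] [Fintype α] [Fintype ι]
    [DecidableEq ι] {G : Finset (Finset α)} {P : ι → Finset α} {g : α → ι} (hg : ∀ v i, v ∈ P i ↔ g v = i)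
    (hmax : ∀ Q : ι → Finset α, (∀ v, ∃! i, v ∈ Q i) →
      ∑ D ∈ G, (univ.filter (fun i => (D ∩ Q i).Nonempty)).card ≤
      ∑ D ∈ G, (univ.filter (fun i => (D ∩ P i).Nonempty)).card)
    (g' : α → ι) :
    ∑ D ∈ G, (D.image g').card ≤ ∑ D ∈ G, (D.image g).card := by
  let Q : ι → Finset α := fun i => univ.filter (g' · = i)
  have hQ : ∀ v i, v ∈ Q i ↔ g' v = i := by simp [Q]
  simpa only [filter_inter_nonempty_eq_image hg, filter_inter_nonempty_eq_image hQ] using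
    hmax Q fun v => ⟨g' v, (hQ v _).2 rfl, fun i hi => ((hQ v i).1 hi).symm⟩

lemma mem_multipartite_of_card_image_eq {n k l : ℕ} {P : Fin l → Finset (Fin n)}
    {g : Fin n → Fin l} (hg : ∀ v i, v ∈ P i ↔ g v = i) {D : Finset (Fin n)} (hD : D.card = k)
    (hinj : (D.image g).card = k) : D ∈ multipartite k P := by
  rw [← hD, card_image_iff] at hinj
  refine mem_filter.2 ⟨mem_powersetCard_univ.2 hD, fun i => card_le_one.2 ?_⟩
  intro a ha b hb
  rw [mem_inter, hg] at ha hb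
  exact hinj ha.1 hb.1 (ha.2.trans hb.2.symm)

lemma sum_card_image_add_card_sdiff_multipartite_le {n k l : ℕ} {G : Finset (Finset (Fin n))}
    (hG : IsUniform k G) {P : Fin l → Finset (Fin n)} {g : Fin n → Fin l}
    (hg : ∀ v i, v ∈ P i ↔ g v = i) :
    ∑ D ∈ G, (D.image g).card + (G \ multipartite k P).card ≤ k * G.card := by
  rw [sdiff_eq_filter, card_filter, ← sum_add_distrib, mul_comm, ← smul_eq_mul, ← sum_const]
  refine sum_le_sum fun D hD => ?_
  have himage : (D.image g).card ≤ k := hG D hD ▸ card_image_le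
  split_ifs with hT
  · omega
  · have : (D.image g).card ≠ k := fun h => hT (mem_multipartite_of_card_image_eq hg (hG D hD) h)
    omega

lemma mul_card_le_sum_card_image_add {α ι : Type*} [DecidableEq ι] {k : ℕ}
    (G : Finset (Finset α)) (g : α → ι) (p : Finset α → Prop)
    [DecidablePred p] (hp : ∀ D ∈ G, ¬ p D → (D.image g).card = k) :
    k * G.card ≤ ∑ D ∈ G, (D.image g).card + k * (G.filter p).card := by
  rw [card_filter, mul_sum, mul_comm, ← smul_eq_mul, ← sum_const, ← sum_add_distrib]
  refine sum_le_sum fun D hD => ?_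
  split_ifs with hD'
  · omega
  · rw [hp D hD hD']
    omega

lemma card_image_eq_of_mem_turan {n l k : ℕ} {r : Fin n → Fin l} (hr : ∀ v, (r v : ℕ) = v % l)
    {E : Finset (Fin n)} (hE : E ∈ turan n l k) : (E.image r).card = E.card := by
  rw [← (mem_filter.1 hE).2, ← card_image_of_injective _ Fin.val_injective, image_image]
  exact congrArg card (image_congr fun v _ => hr v)

lemma card_filter_notMem_le_card_symmDiff {β γ : Type*} [DecidableEq γ] {φ : β → γ}
    (hφ : φ.Injective) (G : Finset β) (H : Finset γ) :
    (G.filter (φ · ∉ H)).card ≤ (symmDiff (G.image φ) H).card := by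
  refine card_le_card_of_injOn φ (fun D hD => ?_) hφ.injOn
  rw [coe_filter] at hD
  exact mem_symmDiff.2 (Or.inl ⟨mem_image_of_mem φ hD.1, hD.2⟩)

theorem stmt11_general (n l k : ℕ) (c : ℝ)
    (G : Finset (Finset (Fin n))) (hG : IsUniform k G)
    (P : Fin l → Finset (Fin n)) (hP : ∀ v : Fin n, ∃! i, v ∈ P i)
    (hmax : ∀ Q : Fin l → Finset (Fin n), (∀ v : Fin n, ∃! i, v ∈ Q i) →
      (∑ D ∈ G, (Finset.univ.filter (fun i => (D ∩ Q i).Nonempty)).card) ≤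
      (∑ D ∈ G, (Finset.univ.filter (fun i => (D ∩ P i).Nonempty)).card))
    (hclose : Close G (turan n l k) (c * (n.choose k : ℝ))) :
    ((G \ multipartite k P).card : ℝ) ≤ c * (k : ℝ) * (n.choose k : ℝ) := by
  obtain ⟨g, hg⟩ := exists_fun_mem_iff_of_existsUnique hP
  obtain ⟨σ, hσ⟩ := hclose
  let r : Fin n → Fin l := fun v => ⟨v % l, Nat.mod_lt _ (g v).pos⟩
  have hupper := sum_card_image_add_card_sdiff_multipartite_le hG hg
  have hlower := mul_card_le_sum_card_image_add G (r ∘ σ) (fun D => D.image σ ∉ turan n l k)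
    fun D hD hgood => by
      rw [← image_image, card_image_eq_of_mem_turan (fun _ => rfl) (not_not.1 hgood),
        card_image_of_injective _ σ.injective, hG D hD]
  have hscore := sum_card_image_le_of_maximal hg hmax (r ∘ σ)
  set bad := G.filter (fun D => D.image σ ∉ turan n l k)
  have hbad : (bad.card : ℝ) ≤ c * n.choose k :=
    (Nat.cast_le.2 (card_filter_notMem_le_card_symmDiff (image_injective σ.injective) _ _)).trans hσ
  calc ((G \ multipartite k P).card : ℝ) ≤ k * bad.card := by exact_mod_cast (by omega)
    _ ≤ k * (c * n.choose k) := by gcongr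
    _ = c * k * n.choose k := by ring

/-- if the partition `P` maximizes `f = Σ_{D ∈ G} #(parts met by D)` and `G`
is `c·C(n,k)`-close to `T^(k)(n,l)`, then `|G \\ T| ≤ ck·C(n,k)` where `T` is the complete
`l`-partite `k`-graph of `P`. -/
theorem stmt11 (n l k : ℕ) (hk : 1 ≤ k) (c : ℝ) (hc : 0 < c)
    (G : Finset (Finset (Fin n))) (hG : IsUniform k G)
    (P : Fin l → Finset (Fin n)) (hP : ∀ v : Fin n, ∃! i, v ∈ P i)
    (hmax : ∀ Q : Fin l → Finset (Fin n), (∀ v : Fin n, ∃! i, v ∈ Q i) →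
      (∑ D ∈ G, (Finset.univ.filter (fun i => (D ∩ Q i).Nonempty)).card) ≤
      (∑ D ∈ G, (Finset.univ.filter (fun i => (D ∩ P i).Nonempty)).card))
    (hclose : Close G (turan n l k) (c * (n.choose k : ℝ))) :
    ((G \ multipartite k P).card : ℝ) ≤ c * (k : ℝ) * (n.choose k : ℝ) :=
  stmt11_general n l k c G hG P hP hmax hclose
end
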